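/- arXiv:hep-th/9905102 — 6 statements merged into one kernel-verified Lean document; each statement's English description precedes it below -/
import Mathlib

section
/- If F is a bounded continuous function on the closed strip S = {z ∈ ℂ : 0 ≤ Im z ≤ 1}, analytic in the interior of S, and satisfies F(t) = F(t + i) for all real t, then F is constant on S. -/
/-!
For fixed `x`, periodicity closes the vertical segment `y ↦ F (x + y * I)`, `0 ≤ y ≤ 1`, into a
loop on `ℝ / ℤ`; let `c n x` be its `n`-th Fourier coefficient. Cauchy's theorem on the rectangles
`[x, x'] × [0, 1]`, applied to the still periodic function `exp (-2πnz) * F z`, gives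
`c n x = exp (2πnx) * c n 0`. As `‖c n x‖ ≤ sup ‖F‖` for every `x`, this forces `c n = 0` for
`n ≠ 0`, while `c 0` does not depend on `x`. A continuous function on the circle whose only
nonzero Fourier coefficient is the zeroth one is constant, so `F` is the constant `c 0 0`.
-/

open Complex

/-- The closed strip `S = {z : 0 ≤ Im z ≤ 1}`. -/
def Strip : Set ℂ := {z | 0 ≤ z.im ∧ z.im ≤ 1}

/-- `F` belongs to `A(S)`: bounded and continuous on the closed strip,
holomorphic in its interior. -/
structure MemAS (F : ℂ → ℂ) : Prop where
  cont : ContinuousOn F Strip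
  diff : DifferentiableOn ℂ F {z : ℂ | 0 < z.im ∧ z.im < 1}
  bdd : ∃ C : ℝ, ∀ z ∈ Strip, ‖F z‖ ≤ C

open Real Set MeasureTheory AddCircle

lemma eq_zero_of_forall_norm_mul_exp_le {E : Type*} [NormedAddCommGroup E] {v : E} {a C : ℝ}
    (ha : a ≠ 0) (h : ∀ x : ℝ, ‖v‖ * Real.exp (a * x) ≤ C) : v = 0 := by
  by_contra hne
  have hv : 0 < ‖v‖ := norm_pos_iff.mpr hne
  have ht : 0 < (|C| + 1) / ‖v‖ := by positivity
  have := h (Real.log ((|C| + 1) / ‖v‖) / a)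
  rw [mul_div_cancel₀ _ ha, Real.exp_log ht, mul_div_cancel₀ _ hv.ne'] at this
  linarith [le_abs_self C]

section Fourier

variable {T : ℝ} [Fact (0 < T)]

lemma norm_fourierCoeff_le {f : AddCircle T → ℂ} {C : ℝ} (hf : ∀ x, ‖f x‖ ≤ C) (n : ℤ) :
    ‖fourierCoeff f n‖ ≤ C := by
  calc ‖fourierCoeff f n‖ ≤ C * haarAddCircle.real (univ : Set (AddCircle T)) :=
        norm_integral_le_of_norm_le_const <| .of_forall fun x => by
          rw [norm_smul, fourier_apply, Circle.norm_coe, one_mul]; exact hf x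
    _ = C := by rw [probReal_univ, mul_one]

theorem ContinuousMap.eq_fourierCoeff_zero_of_fourierCoeff_eq_zero (f : C(AddCircle T, ℂ))
    (h : ∀ n ≠ 0, fourierCoeff f n = 0) (x : AddCircle T) : f x = fourierCoeff f 0 := by
  have hsum := has_pointwise_sum_fourier_series_of_summable (hasSum_single 0 h).summable x
  refine hsum.unique ?_
  simpa using hasSum_single (f := fun n => fourierCoeff f n • fourier n x) 0
    fun n hn => by rw [h n hn, zero_smul]

end Fourier

section Strip

variable {F G : ℂ → ℂ}

lemma ofReal_add_ofReal_mul_I_mem_strip (x : ℝ) {y : ℝ} (hy : y ∈ Icc (0 : ℝ) 1) :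
    (x + y * I : ℂ) ∈ Strip := by
  simpa [Strip] using hy

theorem intervalIntegral_vertical_eq_of_periodic (hc : ContinuousOn G Strip)
    (hd : DifferentiableOn ℂ G {z | 0 < z.im ∧ z.im < 1}) (hper : ∀ t : ℝ, G t = G (t + I))
    (a b : ℝ) : ∫ y in (0 : ℝ)..1, G (a + y * I) = ∫ y in (0 : ℝ)..1, G (b + y * I) := by
  have h := integral_boundary_rect_eq_zero_of_continuousOn_of_differentiableOn G a (b + I)
    (hc.mono fun z hz => ?_) (hd.mono fun z hz => ?_)
  · simp only [ofReal_re, ofReal_im, add_re, add_im, I_re, I_im, add_zero, zero_add,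
      ofReal_zero, ofReal_one, zero_mul, one_mul] at h
    simp only [← hper, sub_self, zero_add, ← smul_sub, smul_eq_zero, I_ne_zero, false_or,
      sub_eq_zero] at h
    exact h.symm
  · simp_all [mem_reProdIm, Strip]
  · simp_all [mem_reProdIm]

noncomputable def verticalLoop (F : ℂ → ℂ) (x : ℝ) : AddCircle (1 : ℝ) → ℂ :=
  liftIco 1 0 fun y : ℝ => F (x + y * I)

lemma continuous_verticalLoop (hc : ContinuousOn F Strip) (hper : ∀ t : ℝ, F t = F (t + I))
    (x : ℝ) : Continuous (verticalLoop F x) := by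
  refine liftIco_zero_continuous (by simpa using hper x) (hc.comp (by fun_prop) ?_)
  exact fun y hy => ofReal_add_ofReal_mul_I_mem_strip x hy

lemma verticalLoop_coe (x : ℝ) {y : ℝ} (hy : y ∈ Ico (0 : ℝ) 1) :
    verticalLoop F x y = F (x + y * I) :=
  liftIco_zero_coe_apply hy

lemma norm_verticalLoop_le {C : ℝ} (hC : ∀ z ∈ Strip, ‖F z‖ ≤ C) (x : ℝ)
    (q : AddCircle (1 : ℝ)) : ‖verticalLoop F x q‖ ≤ C :=
  hC _ <| ofReal_add_ofReal_mul_I_mem_strip x <| Ico_subset_Icc_self <| by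
    simpa using (equivIco 1 0 q).2

lemma fourierCoeff_verticalLoop (x : ℝ) (n : ℤ) :
    fourierCoeff (verticalLoop F x) n =
      Real.exp (2 * π * n * x) *
        ∫ y in (0 : ℝ)..1, cexp (-2 * π * n * (x + y * I)) * F (x + y * I) := by
  rw [verticalLoop, fourierCoeff_liftIco_eq, fourierCoeffOn_eq_integral,
    ← intervalIntegral.integral_const_mul]
  simp only [zero_add, sub_zero, div_one, one_smul, smul_eq_mul]
  refine intervalIntegral.integral_congr fun y _ => ?_
  rw [fourier_coe_apply, ofReal_exp, ← mul_assoc, ← Complex.exp_add]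
  congr 2
  push_cast
  ring

lemma fourierCoeff_verticalLoop_eq_exp_mul (hF : MemAS F) (hper : ∀ t : ℝ, F t = F (t + I))
    (x : ℝ) (n : ℤ) :
    fourierCoeff (verticalLoop F x) n =
      Real.exp (2 * π * n * x) * fourierCoeff (verticalLoop F 0) n := by
  set G : ℂ → ℂ := fun z => cexp (-2 * π * n * z) * F z
  have hGper : ∀ t : ℝ, G t = G (t + I) := fun t => by
    have h : -2 * π * n * ((t : ℂ) + I) = -2 * π * n * t + (-n : ℤ) * (2 * π * I) := by
      push_cast; ring
    simp only [G, h, Complex.exp_add, exp_int_mul_two_pi_mul_I, mul_one, ← hper]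
  have hG := intervalIntegral_vertical_eq_of_periodic (G := G)
    ((by fun_prop : Continuous fun z : ℂ => cexp (-2 * π * n * z)).continuousOn.mul hF.cont)
    ((by fun_prop : Differentiable ℂ fun z : ℂ => cexp (-2 * π * n * z)).differentiableOn.mul
      hF.diff) hGper x 0
  simp only [G] at hG
  rw [fourierCoeff_verticalLoop, fourierCoeff_verticalLoop, hG]
  simp

lemma fourierCoeff_verticalLoop_eq_zero (hF : MemAS F) (hper : ∀ t : ℝ, F t = F (t + I))
    {n : ℤ} (hn : n ≠ 0) (x : ℝ) : fourierCoeff (verticalLoop F x) n = 0 := by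
  obtain ⟨C, hC⟩ := hF.bdd
  suffices h0 : fourierCoeff (verticalLoop F 0) n = 0 by
    rw [fourierCoeff_verticalLoop_eq_exp_mul hF hper, h0, mul_zero]
  refine eq_zero_of_forall_norm_mul_exp_le (a := 2 * π * n) (C := C) (by positivity) fun t => ?_
  have h := norm_fourierCoeff_le (norm_verticalLoop_le hC t) n
  rwa [fourierCoeff_verticalLoop_eq_exp_mul hF hper, norm_mul, norm_real, Real.norm_eq_abs,
    abs_of_pos (Real.exp_pos _), mul_comm] at h

lemma verticalLoop_eq_fourierCoeff_zero (hF : MemAS F) (hper : ∀ t : ℝ, F t = F (t + I))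
    (x : ℝ) (q : AddCircle (1 : ℝ)) : verticalLoop F x q = fourierCoeff (verticalLoop F 0) 0 := by
  have h := ContinuousMap.eq_fourierCoeff_zero_of_fourierCoeff_eq_zero
    ⟨_, continuous_verticalLoop hF.cont hper x⟩
    (fun n hn => fourierCoeff_verticalLoop_eq_zero hF hper hn x) q
  simpa [fourierCoeff_verticalLoop_eq_exp_mul hF hper x 0] using h

end Strip

/-- a function in `A(S)` with `F(t) = F(t+i)` for all real `t`
is constant on the strip. -/
theorem stmt0 (F : ℂ → ℂ) (hF : MemAS F)
    (hper : ∀ t : ℝ, F (t : ℂ) = F ((t : ℂ) + Complex.I)) :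
    ∀ z ∈ Strip, ∀ w ∈ Strip, F z = F w := by
  have hval : ∀ z ∈ Strip, F z = fourierCoeff (verticalLoop F 0) 0 := by
    rintro z ⟨hz0, hz1⟩
    rcases hz1.lt_or_eq with hlt | him
    · rw [← verticalLoop_eq_fourierCoeff_zero hF hper z.re z.im, verticalLoop_coe _ ⟨hz0, hlt⟩,
        re_add_im]
    · have hz : z = z.re + I := Complex.ext (by simp) (by simp [him])
      rw [hz, ← hper, ← verticalLoop_eq_fourierCoeff_zero hF hper z.re (0 : ℝ),
        verticalLoop_coe _ ⟨le_rfl, zero_lt_one⟩, ofReal_zero, zero_mul, add_zero]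
  intro z hz w hw
  rw [hval z hz, hval w hw]
end

section
/- Let φ be a γ-twisted KMS functional of a C*-dynamical system (A, α). Then φ is γ-invariant: φ(γ(b)) = φ(b) for all b ∈ A. -/
open Complex

variable {A : Type*} [NormedRing A] [StarRing A] [CStarRing A]
  [NormedAlgebra ℂ A] [CompleteSpace A] [StarModule ℂ A]

/-- `φ` is a `γ`-twisted KMS functional for the dynamics `α`. -/
def IsTwistedKMS (α : ℝ → A ≃⋆ₐ[ℂ] A) (γ : A ≃⋆ₐ[ℂ] A) (φ : A →L[ℂ] ℂ) : Prop :=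
  ∀ a b : A, ∃ F : ℂ → ℂ, MemAS F ∧
    (∀ t : ℝ, F (t : ℂ) = φ (α t a * b)) ∧
    (∀ t : ℝ, F ((t : ℂ) + Complex.I) = φ (γ b * α t a))

/-
A function in A(S) with constant boundary values `c` on the real line is constant on the strip:
by the Hadamard three lines theorem `‖F z - c‖ ≤ 0 ^ (1 - Im z) * M ^ Im z = 0` in the open strip,
and continuity carries this to the upper edge. For the KMS boundary function of `(1, b)` the lower
edge is `φ b` and the upper edge is `φ (γ b)`.
-/

open Set Complex.HadamardThreeLines

theorem closure_verticalStrip {l u : ℝ} (hlu : l < u) :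
    closure (verticalStrip l u) = verticalClosedStrip l u := by
  rw [verticalStrip, closure_preimage_re, closure_Ioo hlu.ne]
  rfl

theorem eqOn_zero_verticalClosedStrip_of_eq_zero_left {E : Type*} [NormedAddCommGroup E]
    [NormedSpace ℂ E] {f : ℂ → E} {l u : ℝ} (hlu : l < u)
    (hd : DiffContOnCl ℂ f (verticalStrip l u))
    (hB : BddAbove ((norm ∘ f) '' verticalClosedStrip l u))
    (hl : ∀ z ∈ re ⁻¹' {l}, f z = 0) :
    EqOn f 0 (verticalClosedStrip l u) := by
  obtain ⟨M, hM⟩ := hB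
  have hu : ∀ z ∈ re ⁻¹' {u}, ‖f z‖ ≤ M := fun z hz =>
    hM ⟨z, ⟨hlu.le.trans_eq hz.symm, hz.le⟩, rfl⟩
  have hopen : EqOn f 0 (verticalStrip l u) := by
    intro z hz
    have h3 := norm_le_interp_of_mem_verticalClosedStrip' hlu (Ioo_subset_Icc_self hz) hd
      ⟨M, hM⟩ (fun w hw => (norm_le_zero_iff.2 (hl w hw))) hu
    have hexp : 0 < 1 - (z.re - l) / (u - l) := by
      rw [sub_pos, div_lt_one (sub_pos.2 hlu)]
      linarith [hz.2]
    rw [Real.zero_rpow hexp.ne', zero_mul] at h3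
    exact norm_le_zero_iff.1 h3
  refine hopen.of_subset_closure ?_ continuousOn_const (preimage_mono Ioo_subset_Icc_self)
    (closure_verticalStrip hlu).ge
  simpa only [closure_verticalStrip hlu] using hd.continuousOn

theorem preimage_I_mul_strip : (I * ·) ⁻¹' Strip = verticalClosedStrip 0 1 := by
  ext z
  simp [Strip, verticalClosedStrip]

theorem MemAS.eq_of_forall_ofReal_eq {F : ℂ → ℂ} {c : ℂ} (hF : MemAS F)
    (hc : ∀ t : ℝ, F t = c) : ∀ z ∈ Strip, F z = c := by
  set g : ℂ → ℂ := fun z => F (I * z) - c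
  have hmul : Continuous (I * · : ℂ → ℂ) := continuous_const_mul I
  have hd : DiffContOnCl ℂ g (verticalStrip 0 1) := by
    refine ⟨(hF.diff.comp (differentiableOn_id.const_mul I) ?_).sub_const c, ?_⟩
    · exact fun z hz => by simpa [verticalStrip] using hz
    · rw [closure_verticalStrip zero_lt_one]
      refine (hF.cont.comp hmul.continuousOn ?_).sub continuousOn_const
      exact preimage_I_mul_strip.ge
  have hB : BddAbove ((norm ∘ g) '' verticalClosedStrip 0 1) := by
    obtain ⟨C, hC⟩ := hF.bdd
    refine ⟨C + ‖c‖, ?_⟩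
    rintro _ ⟨z, hz, rfl⟩
    exact (norm_sub_le _ _).trans
      (add_le_add_left (hC _ (preimage_I_mul_strip.ge hz)) _)
  have hl : ∀ z ∈ re ⁻¹' {(0 : ℝ)}, g z = 0 := by
    intro z hz
    have hreal : I * z = ((-z.im : ℝ) : ℂ) := by
      apply Complex.ext <;> simp [show z.re = 0 from hz]
    simp only [g, hreal, hc, sub_self]
  intro w hw
  have hw' : -I * w ∈ verticalClosedStrip 0 1 := by
    rw [← preimage_I_mul_strip]
    simpa [← mul_assoc] using hw
  simpa [g, ← mul_assoc, sub_eq_zero] using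
    eqOn_zero_verticalClosedStrip_of_eq_zero_left zero_lt_one hd hB hl hw'

theorem stmt2_general (α : ℝ → A ≃⋆ₐ[ℂ] A) (γ : A ≃⋆ₐ[ℂ] A) (φ : A →L[ℂ] ℂ)
    (hKMS : IsTwistedKMS α γ φ) :
    ∀ b : A, φ (γ b) = φ b := by
  intro b
  obtain ⟨F, hF, hlower, hupper⟩ := hKMS 1 b
  have hconst := hF.eq_of_forall_ofReal_eq (c := φ b) fun t => by simp [hlower]
  have hI : I ∈ Strip := by simp [Strip]
  calc φ (γ b) = F I := by simpa using (hupper 0).symm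
    _ = φ b := hconst I hI

/-- a twisted KMS functional is invariant under the twist. -/
theorem stmt2 (α : ℝ → A ≃⋆ₐ[ℂ] A) (γ : A ≃⋆ₐ[ℂ] A) (φ : A →L[ℂ] ℂ)
    (hα0 : ∀ a : A, α 0 a = a)
    (hαadd : ∀ s t : ℝ, ∀ a : A, α (s + t) a = α t (α s a))
    (hKMS : IsTwistedKMS α γ φ) :
    ∀ b : A, φ (γ b) = φ b :=
  stmt2_general α γ φ hKMS
end

section
/- Let M be a von Neumann algebra with cyclic vector Ω, and suppose ω̃ = (·Ω, Ω) is a positive γ̃-twisted KMS functional of (M, α̃) for some automorphism γ̃ of M implemented by a unitary V with VΩ = Ω. If x ∈ M satisfies xΩ = 0, then x*Ω = 0; consequently Ω is separating for M. -/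
open Complex

/-- A bounded analytic function on the strip that vanishes on the top boundary
line vanishes at `0`. -/
lemma memAS_zero_of_top (F : ℂ → ℂ) (hF : MemAS F)
    (htop : ∀ t : ℝ, F ((t : ℂ) + Complex.I) = 0) : F 0 = 0 := by
  obtain ⟨C, hC⟩ := hF.bdd
  set G : ℂ → ℂ := fun z => F (z * Complex.I) with hG
  have hmapsC : Set.MapsTo (fun z : ℂ => z * Complex.I)
      (Complex.HadamardThreeLines.verticalClosedStrip 0 1) Strip := by
    intro z hz
    simp only [Complex.HadamardThreeLines.verticalClosedStrip, Set.mem_preimage,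
      Set.mem_Icc] at hz
    simp only [Strip, Set.mem_setOf_eq, Complex.mul_im, Complex.I_re, Complex.I_im,
      mul_zero, mul_one, zero_add]
    simpa using hz
  have hmapsO : Set.MapsTo (fun z : ℂ => z * Complex.I)
      (Complex.HadamardThreeLines.verticalStrip 0 1) {z : ℂ | 0 < z.im ∧ z.im < 1} := by
    intro z hz
    simp only [Complex.HadamardThreeLines.verticalStrip, Set.mem_preimage,
      Set.mem_Ioo] at hz
    simp only [Set.mem_setOf_eq, Complex.mul_im, Complex.I_re, Complex.I_im,
      mul_zero, mul_one, zero_add]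
    simpa using hz
  have hclos : closure (Complex.HadamardThreeLines.verticalStrip 0 1) ⊆
      Complex.HadamardThreeLines.verticalClosedStrip 0 1 := by
    rw [Complex.HadamardThreeLines.verticalClosedStrip,
      ← closure_Ioo (zero_ne_one),
      ← Complex.closure_preimage_re]
    rfl
  have hmul : Continuous fun z : ℂ => z * Complex.I := continuous_id.mul continuous_const
  have hd : DiffContOnCl ℂ G (Complex.HadamardThreeLines.verticalStrip 0 1) := by
    constructor
    · exact hF.diff.comp ((differentiable_id.mul_const _).differentiableOn) hmapsO
    · exact (hF.cont.comp hmul.continuousOn hmapsC).mono hclos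
  have hB : BddAbove ((norm ∘ G) ''
      (Complex.HadamardThreeLines.verticalClosedStrip 0 1)) := by
    refine ⟨max C 0, ?_⟩
    rintro r ⟨z, hz, rfl⟩
    exact le_max_of_le_left (hC _ (hmapsC hz))
  have ha : ∀ z ∈ Complex.re ⁻¹' {(0 : ℝ)}, ‖G z‖ ≤ max C 0 := by
    intro z hz
    refine le_max_of_le_left (hC _ ?_)
    simp only [Set.mem_preimage, Set.mem_singleton_iff] at hz
    simp [Strip, Complex.mul_im, hz]
  have hb : ∀ z ∈ Complex.re ⁻¹' {(1 : ℝ)}, ‖G z‖ ≤ 0 := by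
    intro z hz
    simp only [Set.mem_preimage, Set.mem_singleton_iff] at hz
    have hzI : z * Complex.I = ((-z.im : ℝ) : ℂ) + Complex.I := by
      apply Complex.ext <;>
        simp [Complex.mul_re, Complex.mul_im, hz]
    have : G z = 0 := by rw [hG]; simp only; rw [hzI]; exact htop _
    simp [this]
  have hzero : ∀ ε : ℝ, 0 < ε → ε ≤ 1 → F ((ε : ℂ) * Complex.I) = 0 := by
    intro ε hε0 hε1
    have hmem : (ε : ℂ) ∈ Complex.HadamardThreeLines.verticalClosedStrip 0 1 := by
      simp [Complex.HadamardThreeLines.verticalClosedStrip, hε0.le, hε1]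
    have := Complex.HadamardThreeLines.norm_le_interp_of_mem_verticalClosedStrip'
      zero_lt_one hmem hd hB ha hb
    rw [Complex.ofReal_re] at this
    simp only [sub_zero, div_one] at this
    rw [Real.zero_rpow (ne_of_gt hε0), mul_zero] at this
    have := le_antisymm this (norm_nonneg _)
    simpa [hG] using norm_eq_zero.mp this
  -- take the limit ε → 0⁺
  have hpos : ∀ n : ℕ, (0 : ℝ) < ((n : ℝ) + 1)⁻¹ := fun n => by positivity
  have hle : ∀ n : ℕ, ((n : ℝ) + 1)⁻¹ ≤ 1 := fun n =>
    inv_le_one_of_one_le₀ (by linarith [Nat.cast_nonneg (α := ℝ) n])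
  have hseq : Filter.Tendsto (fun n : ℕ => (Complex.ofReal (((n : ℝ) + 1)⁻¹)) * Complex.I)
      Filter.atTop (nhdsWithin 0 Strip) := by
    apply tendsto_nhdsWithin_of_tendsto_nhds_of_eventually_within
    · have h1 : Filter.Tendsto (fun n : ℕ => ((n : ℝ) + 1)⁻¹) Filter.atTop (nhds 0) :=
        tendsto_one_div_add_atTop_nhds_zero_nat.congr (by intro n; rw [one_div])
      have h2 : Filter.Tendsto (fun n : ℕ => Complex.ofReal (((n : ℝ) + 1)⁻¹))
          Filter.atTop (nhds 0) := by
        have h3 := (Complex.continuous_ofReal.tendsto 0).comp h1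
        rw [Complex.ofReal_zero] at h3
        exact h3
      simpa using h2.mul_const Complex.I
    · filter_upwards with n
      have him : ((Complex.ofReal (((n : ℝ) + 1)⁻¹)) * Complex.I).im = ((n : ℝ) + 1)⁻¹ := by
        simp [Complex.mul_im, -Complex.ofReal_inv]
      exact ⟨by rw [him]; exact (hpos n).le, by rw [him]; exact hle n⟩
  have hcont : Filter.Tendsto F (nhdsWithin 0 Strip) (nhds (F 0)) :=
    hF.cont 0 ⟨le_refl 0, zero_le_one⟩
  have hlim : Filter.Tendsto (fun n : ℕ => F ((Complex.ofReal (((n : ℝ) + 1)⁻¹)) * Complex.I))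
      Filter.atTop (nhds (F 0)) := hcont.comp hseq
  have hconst : ∀ n : ℕ, F ((Complex.ofReal (((n : ℝ) + 1)⁻¹)) * Complex.I) = 0 := fun n =>
    hzero _ (hpos n) (hle n)
  have : Filter.Tendsto (fun _ : ℕ => (0 : ℂ)) Filter.atTop (nhds (F 0)) := by
    exact hlim.congr (fun n => hconst n)
  exact (tendsto_nhds_unique tendsto_const_nhds this).symm

variable {H : Type*} [NormedAddCommGroup H] [InnerProductSpace ℂ H] [CompleteSpace H]

/-- for a positive twisted KMS functional `ω̃ = (·Ω, Ω)` of a von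
Neumann algebra `M` with cyclic vector `Ω`, `xΩ = 0` implies `x*Ω = 0`, and `Ω`
is separating for `M`. -/
theorem stmt5 (M : VonNeumannAlgebra H) (Ω : H)
    (hcyc : Dense ((fun x : H →L[ℂ] H => x Ω) '' (M : Set (H →L[ℂ] H))))
    (U : ℝ → H →L[ℂ] H) (hUu : ∀ t, U t ∈ unitary (H →L[ℂ] H))
    (hU0 : U 0 = 1) (hUadd : ∀ s t, U (s + t) = U s * U t)
    (hUΩ : ∀ t, U t Ω = Ω)
    (hUM : ∀ t, ∀ x ∈ M, U t * x * star (U t) ∈ M)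
    (V : H →L[ℂ] H) (hVu : V ∈ unitary (H →L[ℂ] H)) (hVΩ : V Ω = Ω)
    (hVM : ∀ x ∈ M, V * x * star V ∈ M)
    (hKMS : ∀ x ∈ M, ∀ y ∈ M, ∃ F : ℂ → ℂ, MemAS F ∧
      (∀ t : ℝ, F (t : ℂ) = (inner ℂ Ω (((U t * x * star (U t)) * y) Ω) : ℂ)) ∧
      (∀ t : ℝ, F ((t : ℂ) + Complex.I) =
        (inner ℂ Ω (((V * y * star V) * (U t * x * star (U t))) Ω) : ℂ))) :
    (∀ x ∈ M, x Ω = 0 → star x Ω = 0) ∧ (∀ x ∈ M, x Ω = 0 → x = 0) := by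
  -- `star (U t) Ω = Ω`
  have hUsΩ : ∀ t, star (U t) Ω = Ω := by
    intro t
    have h1 : star (U t) * U t = 1 := (hUu t).1
    calc star (U t) Ω = star (U t) (U t Ω) := by rw [hUΩ t]
      _ = (star (U t) * U t) Ω := rfl
      _ = Ω := by rw [h1]; rfl
  have key : ∀ x ∈ M, x Ω = 0 → star x Ω = 0 := by
    intro x hx hxΩ
    have h0 : ∀ y ∈ M, (inner ℂ ((star x) Ω) (y Ω) : ℂ) = 0 := by
      intro y hy
      obtain ⟨F, hF, hF0, hF1⟩ := hKMS x hx y hy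
      have htop : ∀ t : ℝ, F ((t : ℂ) + Complex.I) = 0 := by
        intro t
        rw [hF1 t]
        have hαt : (U t * x * star (U t)) Ω = 0 := by
          show (U t) (x (star (U t) Ω)) = 0
          rw [hUsΩ t, hxΩ, map_zero]
        have : ((V * y * star V) * (U t * x * star (U t))) Ω = 0 := by
          show (V * y * star V) ((U t * x * star (U t)) Ω) = 0
          rw [hαt, map_zero]
        rw [this, inner_zero_right]
      have hF00 : F 0 = 0 := by
        have := memAS_zero_of_top F hF htop
        simpa using this
      have h1 : (inner ℂ Ω ((x * y) Ω) : ℂ) = 0 := by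
        have := hF0 0
        rw [Complex.ofReal_zero, hF00, hU0] at this
        simp only [star_one, one_mul, mul_one] at this
        exact this.symm
      calc (inner ℂ ((star x) Ω) (y Ω) : ℂ)
          = inner ℂ ((ContinuousLinearMap.adjoint x) Ω) (y Ω) := by
            rw [ContinuousLinearMap.star_eq_adjoint]
        _ = inner ℂ Ω (x (y Ω)) := ContinuousLinearMap.adjoint_inner_left x (y Ω) Ω
        _ = inner ℂ Ω ((x * y) Ω) := rfl
        _ = 0 := h1
    -- density
    have hfun : (fun v : H => (inner ℂ ((star x) Ω) v : ℂ)) = fun _ => 0 := by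
      apply Continuous.ext_on hcyc
      · exact continuous_const.inner continuous_id
      · exact continuous_const
      · rintro _ ⟨y, hy, rfl⟩
        exact h0 y hy
    have : (inner ℂ ((star x) Ω) ((star x) Ω) : ℂ) = 0 := by
      rw [congrFun hfun ((star x) Ω)]
    exact inner_self_eq_zero.mp this
  refine ⟨key, ?_⟩
  intro x hx hxΩ
  have hstar : ∀ w ∈ M, (star x) (w Ω) = 0 := by
    intro w hw
    have hzx : (star w * x) ∈ M := mul_mem (star_mem hw) hx
    have hzxΩ : (star w * x) Ω = 0 := by
      show (star w) (x Ω) = 0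
      rw [hxΩ, map_zero]
    have := key _ hzx hzxΩ
    rw [star_mul, star_star] at this
    exact this
  have hfun : (⇑(star x) : H → H) = fun _ => 0 := by
    apply Continuous.ext_on hcyc
    · exact (star x).continuous
    · exact continuous_const
    · rintro _ ⟨y, hy, rfl⟩
      exact hstar y hy
  have hsx : star x = 0 := by
    ext v
    rw [congrFun hfun v]
    rfl
  have := congrArg star hsx
  rwa [star_star, star_zero] at this
end

section
/- Let Ω be a cyclic and separating vector for a von Neumann algebra M, with modular operator Δ. Suppose the twisted KMS relation (x*Ω, y*Ω) = (V* e^{H} yΩ, xΩ) holds for all x, y in a dense subalgebra M₀ ⊂ M such that M₀Ω is a core for both Δ and e^{H}, where V is unitary and e^{H} is positive self-adjoint with VΩ = Ω = e^{H}Ω and V commutes with e^{H}. Then Δ = e^{H} and V = 1. -/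
open Complex

variable {H : Type*} [NormedAddCommGroup H] [InnerProductSpace ℂ H] [CompleteSpace H]

/-- The graph of the adjoint of a densely defined operator is closed. -/
lemma aux_adjoint_isClosed (T : H →ₗ.[ℂ] H) (hT : Dense (T.domain : Set H)) :
    T.adjoint.IsClosed := by
  have hgraph : (T.adjoint.graph : Set (H × H)) =
      ⋂ x : T.domain, {p : H × H | (inner ℂ p.2 (x : H) : ℂ) = inner ℂ p.1 (T x)} := by
    ext p
    simp only [Set.mem_iInter, Set.mem_setOf_eq, SetLike.mem_coe, LinearPMap.mem_graph_iff]
    constructor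
    · rintro ⟨y, hy1, hy2⟩ x
      rw [← hy1, ← hy2]
      exact (T.adjoint_isFormalAdjoint hT) y x
    · intro h
      have hmem : p.1 ∈ T.adjoint.domain :=
        LinearPMap.mem_adjoint_domain_of_exists _ ⟨p.2, fun x => h x⟩
      refine ⟨⟨p.1, hmem⟩, rfl, ?_⟩
      exact LinearPMap.adjoint_apply_eq hT ⟨p.1, hmem⟩ (fun x => h x)
  rw [LinearPMap.IsClosed, hgraph]
  refine isClosed_iInter fun x => isClosed_eq ?_ ?_
  · exact (continuous_snd.inner continuous_const)
  · exact (continuous_fst.inner continuous_const)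

omit [CompleteSpace H] in
lemma aux_closure_eq_of_isClosed {f : H →ₗ.[ℂ] H} (hf : f.IsClosed) : f.closure = f := by
  apply LinearPMap.eq_of_eq_graph
  rw [← hf.isClosable.graph_closure_eq_closure_graph]
  exact IsClosed.submodule_topologicalClosure_eq hf

lemma aux_quad (A r : ℝ) (hA : 0 ≤ A) (h : ∀ t : ℝ, 0 ≤ t ^ 2 * A + 2 * t * r) : r = 0 := by
  have hA1 : (0:ℝ) < A + 1 := by linarith
  have h2 : 0 ≤ (r ^ 2 * (A - 2 * (A + 1))) / (A + 1) ^ 2 := by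
    have h1 := h (-(r / (A + 1)))
    convert h1 using 1
    field_simp
    ring
  have h3 : 0 ≤ r ^ 2 * (A - 2 * (A + 1)) := by
    have h4 := mul_nonneg h2 (le_of_lt (pow_pos hA1 2))
    rwa [div_mul_cancel₀] at h4
    positivity
  nlinarith [sq_nonneg r]

lemma aux_cauchy (w f g : ℕ → H) (hf : CauchySeq f) (hg : CauchySeq g)
    (h : ∀ n m, ‖w n - w m‖ ^ 2 ≤ ‖f n - f m‖ * ‖g n - g m‖) : CauchySeq w := by
  rw [Metric.cauchySeq_iff]
  intro ε hε
  set δ : ℝ := min 1 ε with hδ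
  have hδ0 : 0 < δ := lt_min one_pos hε
  obtain ⟨N₁, hN₁⟩ := Metric.cauchySeq_iff.mp hf δ hδ0
  obtain ⟨N₂, hN₂⟩ := Metric.cauchySeq_iff.mp hg δ hδ0
  refine ⟨max N₁ N₂, fun m hm n hn => ?_⟩
  have h1 := hN₁ m (le_trans (le_max_left _ _) hm) n (le_trans (le_max_left _ _) hn)
  have h2 := hN₂ m (le_trans (le_max_right _ _) hm) n (le_trans (le_max_right _ _) hn)
  rw [dist_eq_norm] at h1 h2 ⊢
  have h3 : ‖w m - w n‖ ^ 2 < δ * δ := by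
    refine lt_of_le_of_lt (h m n) ?_
    exact mul_lt_mul'' h1 h2 (norm_nonneg _) (norm_nonneg _)
  have h5 : ‖w m - w n‖ < δ := by
    nlinarith [norm_nonneg (w m - w n), hδ0]
  exact lt_of_lt_of_le h5 (min_le_right _ _)

/-- if the modular operator `Δ` of `(M, Ω)` and a positive
self-adjoint operator `e^H` (commuting with a unitary `V`, both fixing `Ω`)
satisfy `(x*Ω, y*Ω) = (Δ yΩ, xΩ) = (V* e^H yΩ, xΩ)` on a common core `M₀Ω`,
then `Δ = e^H` and `V = 1`. -/
theorem stmt6 (M : VonNeumannAlgebra H) (Ω : H)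
    (hcyc : Dense ((fun x : H →L[ℂ] H => x Ω) '' (M : Set (H →L[ℂ] H))))
    (hsep : ∀ x ∈ M, x Ω = 0 → x = 0)
    (M₀ : StarSubalgebra ℂ (H →L[ℂ] H)) (hM₀ : (M₀ : Set (H →L[ℂ] H)) ⊆ M)
    (Δ E : H →ₗ.[ℂ] H)
    (hΔdense : Dense (Δ.domain : Set H)) (hEdense : Dense (E.domain : Set H))
    (hΔsa : Δ.adjoint = Δ) (hEsa : E.adjoint = E)
    (hΔpos : ∀ v : Δ.domain, 0 ≤ (inner ℂ (v : H) (Δ v) : ℂ).re ∧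
      (inner ℂ (v : H) (Δ v) : ℂ).im = 0)
    (hEpos : ∀ v : E.domain, 0 ≤ (inner ℂ (v : H) (E v) : ℂ).re ∧
      (inner ℂ (v : H) (E v) : ℂ).im = 0)
    (V : H →L[ℂ] H) (hVu : V ∈ unitary (H →L[ℂ] H)) (hVΩ : V Ω = Ω)
    (hEΩdom : Ω ∈ E.domain) (hEΩ : E ⟨Ω, hEΩdom⟩ = Ω)
    (hVE : ∀ v : E.domain, ∃ h : V (v : H) ∈ E.domain, E ⟨V (v : H), h⟩ = V (E v))
    (hdom : ∀ x ∈ M₀, x Ω ∈ Δ.domain ∧ x Ω ∈ E.domain)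
    -- M₀Ω is a core for Δ and for E
    (hcoreΔ : (Δ.domRestrict
      (Submodule.span ℂ ((fun x : H →L[ℂ] H => x Ω) '' M₀))).closure = Δ)
    (hcoreE : (E.domRestrict
      (Submodule.span ℂ ((fun x : H →L[ℂ] H => x Ω) '' M₀))).closure = E)
    -- the modular KMS relation (x*Ω, y*Ω) = (Δ yΩ, xΩ)
    (hmod : ∀ x, ∀ hx : x ∈ M₀, ∀ y, ∀ hy : y ∈ M₀,
      (inner ℂ ((star y) Ω) ((star x) Ω) : ℂ) =
        inner ℂ (x Ω) (Δ ⟨y Ω, (hdom y hy).1⟩))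
    -- the twisted KMS relation (x*Ω, y*Ω) = (V* e^H yΩ, xΩ)
    (htwist : ∀ x, ∀ hx : x ∈ M₀, ∀ y, ∀ hy : y ∈ M₀,
      (inner ℂ ((star y) Ω) ((star x) Ω) : ℂ) =
        inner ℂ (x Ω) ((star V) (E ⟨y Ω, (hdom y hy).2⟩))) :
    Δ = E ∧ V = 1 := by
  classical
  set S' : Submodule ℂ H := Submodule.span ℂ ((fun x : H →L[ℂ] H => x Ω) '' M₀) with hS'def
  -- membership of the span in the domains
  have hSΔ : S' ≤ Δ.domain := by
    rw [hS'def, Submodule.span_le]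
    rintro _ ⟨x, hx, rfl⟩
    exact (hdom x hx).1
  have hSE : S' ≤ E.domain := by
    rw [hS'def, Submodule.span_le]
    rintro _ ⟨x, hx, rfl⟩
    exact (hdom x hx).2
  -- V (star V w) = w and star V (V w) = w
  have hVsV : ∀ w : H, V ((star V) w) = w := by
    intro w
    have h := Unitary.mul_star_self_of_mem hVu
    calc V ((star V) w) = (V * star V) w := rfl
    _ = w := by rw [h]; rfl
  have hsVV : ∀ w : H, (star V) (V w) = w := by
    intro w
    have h := Unitary.star_mul_self_of_mem hVu
    calc (star V) (V w) = (star V * V) w := rfl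
    _ = w := by rw [h]; rfl
  have hVinner : ∀ x y : H, (inner ℂ (V x) (V y) : ℂ) = inner ℂ x y := fun x y =>
    ContinuousLinearMap.inner_map_map_of_mem_unitary hVu x y
  have hsVinner_r : ∀ x y : H, (inner ℂ x ((star V) y) : ℂ) = inner ℂ (V x) y := by
    intro x y
    rw [ContinuousLinearMap.star_eq_adjoint, ContinuousLinearMap.adjoint_inner_right]
  -- closedness
  have hΔclosed : Δ.IsClosed := by
    have h := aux_adjoint_isClosed Δ hΔdense
    rwa [hΔsa] at h
  have hEclosed : E.IsClosed := by
    have h := aux_adjoint_isClosed E hEdense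
    rwa [hEsa] at h
  set R : H →ₗ.[ℂ] H := Δ.domRestrict S' with hRdef
  set RE : H →ₗ.[ℂ] H := E.domRestrict S' with hREdef
  have hRclosable : R.IsClosable := hΔclosed.isClosable.leIsClosable LinearPMap.domRestrict_le
  have hREclosable : RE.IsClosable := hEclosed.isClosable.leIsClosable LinearPMap.domRestrict_le
  have hgraphΔ : Δ.graph = R.graph.topologicalClosure := by
    rw [hRclosable.graph_closure_eq_closure_graph, hcoreΔ]
  have hgraphE : E.graph = RE.graph.topologicalClosure := by
    rw [hREclosable.graph_closure_eq_closure_graph, hcoreE]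
  -- density of S'
  have hS'dense : Dense (S' : Set H) := by
    have hsub : (Δ.domain : Set H) ⊆ closure (S' : Set H) := by
      intro v hv
      have hvg : (v, Δ ⟨v, hv⟩) ∈ Δ.graph := Δ.mem_graph ⟨v, hv⟩
      rw [hgraphΔ] at hvg
      have hvc : (v, Δ ⟨v, hv⟩) ∈ closure (R.graph : Set (H × H)) := by
        rwa [← Submodule.topologicalClosure_coe]
      have h1 : v ∈ Prod.fst '' closure (R.graph : Set (H × H)) :=
        ⟨(v, Δ ⟨v, hv⟩), hvc, rfl⟩
      have h2 : Prod.fst '' closure (R.graph : Set (H × H)) ⊆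
          closure (Prod.fst '' (R.graph : Set (H × H))) :=
        image_closure_subset_closure_image continuous_fst
      refine closure_mono ?_ (h2 h1)
      rintro _ ⟨p, hp, rfl⟩
      obtain ⟨y, hy1, -⟩ := (LinearPMap.mem_graph_iff _).mp hp
      rw [← hy1]
      exact y.2.1
    intro x
    have h := hΔdense x
    exact closure_minimal hsub isClosed_closure h
  -- symmetry
  have symΔ : ∀ u v : Δ.domain, (inner ℂ (Δ u) (v : H) : ℂ) = inner ℂ (u : H) (Δ v) := by
    have h := Δ.adjoint_isFormalAdjoint hΔdense
    rw [hΔsa] at h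
    exact h
  have symE : ∀ u v : E.domain, (inner ℂ (E u) (v : H) : ℂ) = inner ℂ (u : H) (E v) := by
    have h := E.adjoint_isFormalAdjoint hEdense
    rw [hEsa] at h
    exact h
  -- T₁ = V* ∘ E, T₂ = V ∘ Δ
  set T₁ : H →ₗ.[ℂ] H :=
    ⟨E.domain, ((star V : H →L[ℂ] H) : H →ₗ[ℂ] H).comp E.toFun⟩ with hT₁def
  set T₂ : H →ₗ.[ℂ] H :=
    ⟨Δ.domain, (V : H →ₗ[ℂ] H).comp Δ.toFun⟩ with hT₂def
  have hT₁app : ∀ v : E.domain, T₁ v = (star V) (E v) := fun v => rfl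
  have hT₂app : ∀ v : Δ.domain, T₂ v = V (Δ v) := fun v => rfl
  have hT₁closed : T₁.IsClosed := by
    have hpre : (T₁.graph : Set (H × H)) =
        (fun p : H × H => (p.1, V p.2)) ⁻¹' (E.graph : Set (H × H)) := by
      ext p
      simp only [Set.mem_preimage, SetLike.mem_coe, LinearPMap.mem_graph_iff]
      constructor
      · rintro ⟨y, hy1, hy2⟩
        exact ⟨y, hy1, by rw [← hy2, hT₁app, hVsV]⟩
      · rintro ⟨y, hy1, hy2⟩
        refine ⟨y, hy1, ?_⟩
        rw [hT₁app]
        rw [hy2, hsVV]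
    rw [LinearPMap.IsClosed, hpre]
    exact IsClosed.preimage (continuous_fst.prodMk (V.continuous.comp continuous_snd)) hEclosed
  have hT₂closed : T₂.IsClosed := by
    have hpre : (T₂.graph : Set (H × H)) =
        (fun p : H × H => (p.1, (star V) p.2)) ⁻¹' (Δ.graph : Set (H × H)) := by
      ext p
      simp only [Set.mem_preimage, SetLike.mem_coe, LinearPMap.mem_graph_iff]
      constructor
      · rintro ⟨y, hy1, hy2⟩
        exact ⟨y, hy1, by rw [← hy2, hT₂app, hsVV]⟩
      · rintro ⟨y, hy1, hy2⟩
        refine ⟨y, hy1, ?_⟩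
        rw [hT₂app, hy2, hVsV]
    rw [LinearPMap.IsClosed, hpre]
    exact IsClosed.preimage
      (continuous_fst.prodMk ((star V).continuous.comp continuous_snd)) hΔclosed
  -- the key pointwise identity on S'
  have hkey : S' ≤ Δ.eqLocus T₁ := by
    rw [hS'def, Submodule.span_le]
    rintro _ ⟨y, hy, rfl⟩
    refine ⟨(hdom y hy).1, (hdom y hy).2, ?_⟩
    rw [hT₁app]
    -- Δ (yΩ) = star V (E (yΩ)) via density
    have hd : ∀ u ∈ S',
        (inner ℂ (Δ ⟨y Ω, (hdom y hy).1⟩ - (star V) (E ⟨y Ω, (hdom y hy).2⟩)) u : ℂ) = 0 := by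
      intro u hu
      have hgen : ∀ x ∈ M₀,
          (inner ℂ (Δ ⟨y Ω, (hdom y hy).1⟩ - (star V) (E ⟨y Ω, (hdom y hy).2⟩)) (x Ω) : ℂ) = 0 := by
        intro x hx
        rw [inner_sub_left]
        have h1 := hmod x hx y hy
        have h2 := htwist x hx y hy
        rw [← inner_conj_symm (Δ ⟨y Ω, (hdom y hy).1⟩) (x Ω),
          ← inner_conj_symm ((star V) (E ⟨y Ω, (hdom y hy).2⟩)) (x Ω),
          ← h1, ← h2, sub_self]
      set d : H := Δ ⟨y Ω, (hdom y hy).1⟩ - (star V) (E ⟨y Ω, (hdom y hy).2⟩) with hddef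
      have hK : S' ≤ LinearMap.ker (innerSL ℂ d : H →ₗ[ℂ] ℂ) := by
        rw [hS'def, Submodule.span_le]
        rintro _ ⟨x, hx, rfl⟩
        simpa using hgen x hx
      simpa using hK hu
    have hz := hS'dense.eq_zero_of_inner_left ℂ (x :=
      Δ ⟨y Ω, (hdom y hy).1⟩ - (star V) (E ⟨y Ω, (hdom y hy).2⟩)) (fun v hv => hd v hv)
    exact sub_eq_zero.mp hz
  -- R ≤ T₁ and RE ≤ T₂
  have hRT₁ : R ≤ T₁ := by
    constructor
    · intro v hv
      exact hSE hv.1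
    · intro x yy hxy
      obtain ⟨hf, hg, heq⟩ := hkey x.2.1
      have h1 : R x = Δ ⟨(x : H), hf⟩ := LinearPMap.domRestrict_apply rfl
      have h2 : T₁ yy = T₁ ⟨(x : H), hg⟩ := by
        congr 1
        exact Subtype.ext hxy.symm
      rw [h1, h2, heq]
  have hRET₂ : RE ≤ T₂ := by
    constructor
    · intro v hv
      exact hSΔ hv.1
    · intro x yy hxy
      obtain ⟨hf, hg, heq⟩ := hkey x.2.1
      have h1 : RE x = E ⟨(x : H), hg⟩ := LinearPMap.domRestrict_apply rfl
      have h2 : T₂ yy = T₂ ⟨(x : H), hf⟩ := by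
        congr 1
        exact Subtype.ext hxy.symm
      have h3 : E ⟨(x : H), hg⟩ = V (Δ ⟨(x : H), hf⟩) := by
        rw [heq, hT₁app, hVsV]
      rw [h1, h2, hT₂app, h3]
  have hΔT₁ : Δ ≤ T₁ := by
    rw [← hcoreΔ]
    calc R.closure ≤ T₁.closure := hT₁closed.isClosable.closure_mono hRT₁
    _ = T₁ := aux_closure_eq_of_isClosed hT₁closed
  have hET₂ : E ≤ T₂ := by
    rw [← hcoreE]
    calc RE.closure ≤ T₂.closure := hT₂closed.isClosable.closure_mono hRET₂
    _ = T₂ := aux_closure_eq_of_isClosed hT₂closed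
  have eqdom : Δ.domain = E.domain := le_antisymm hΔT₁.1 hET₂.1
  have hΔVE : ∀ v : Δ.domain, Δ v = (star V) (E ⟨(v : H), hΔT₁.1 v.2⟩) := by
    intro v
    have := hΔT₁.2 (x := v) (y := ⟨(v : H), hΔT₁.1 v.2⟩) rfl
    rwa [hT₁app] at this
  -- V maps E.domain to itself
  have hVdom : ∀ v : E.domain, V (v : H) ∈ E.domain := fun v => (hVE v).choose
  have hVEval : ∀ v : E.domain, E ⟨V (v : H), hVdom v⟩ = V (E v) := fun v => (hVE v).choose_spec
  -- star V (E u) = V (E u)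
  have comm' : ∀ u : E.domain, (star V) (E u) = V (E u) := by
    intro u
    have hu' : (u : H) ∈ Δ.domain := hET₂.1 u.2
    refine hEdense.eq_of_inner_left ℂ (fun v hv => ?_)
    have hv' : (v : H) ∈ E.domain := hv
    have hvΔ : (v : H) ∈ Δ.domain := hET₂.1 hv
    calc (inner ℂ ((star V) (E u)) (v : H) : ℂ)
        = inner ℂ (Δ ⟨(u : H), hu'⟩) (v : H) := by rw [hΔVE ⟨(u : H), hu'⟩]
      _ = inner ℂ (u : H) (Δ ⟨(v : H), hvΔ⟩) := symΔ ⟨(u : H), hu'⟩ ⟨(v : H), hvΔ⟩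
      _ = inner ℂ (u : H) ((star V) (E ⟨(v : H), hv'⟩)) := by rw [hΔVE ⟨(v : H), hvΔ⟩]
      _ = inner ℂ (V (u : H)) (E ⟨(v : H), hv'⟩) := hsVinner_r _ _
      _ = inner ℂ (E ⟨V (u : H), hVdom u⟩) (v : H) :=
          (symE ⟨V (u : H), hVdom u⟩ ⟨(v : H), hv'⟩).symm
      _ = inner ℂ (V (E u)) (v : H) := by rw [hVEval u]
  -- V fixes the range of E
  have fixVE : ∀ v : E.domain, V (E v) = E v := by
    intro v
    have hvΔ : (v : H) ∈ Δ.domain := hET₂.1 v.2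
    set Vv : E.domain := ⟨V (v : H), hVdom v⟩ with hVvdef
    set z : E.domain := v - Vv with hzdef
    have hzΔ : (z : H) ∈ Δ.domain := hET₂.1 z.2
    set a : ℂ := inner ℂ (v : H) (E v) with hadef
    set b : ℂ := inner ℂ (V (v : H)) (E v) with hbdef
    have ha := hEpos v
    have hb : (inner ℂ (z : H) (Δ ⟨z, hzΔ⟩) : ℂ) = 2 * b - 2 * a := by
      rw [hΔVE ⟨(z : H), hzΔ⟩]
      have hEz : E ⟨(z : H), z.2⟩ = E v - V (E v) := by
        have : E z = E v - E Vv := by rw [hzdef]; exact E.map_sub v Vv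
        rw [show (⟨(z : H), z.2⟩ : E.domain) = z from rfl, this, hVEval v]
      rw [hsVinner_r]
      rw [hEz]
      have hz1 : (z : H) = (v : H) - V (v : H) := rfl
      rw [hz1, map_sub, inner_sub_left, inner_sub_right, inner_sub_right]
      rw [hVinner (v : H) (E v)]  -- ⟪V v, V (E v)⟫ = a
      have e1 : (inner ℂ (V (V (v : H))) (E v) : ℂ) = a := by
        rw [← hsVinner_r (V (v : H)) (E v), comm' v, hVinner]
      have e2 : (inner ℂ (V (V (v : H))) (V (E v)) : ℂ) = b := by
        rw [hVinner]
      rw [e1, e2]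
      ring
    have hbpos := hΔpos ⟨(z : H), hzΔ⟩
    have hb' : (inner ℂ ((v : H)) (Δ ⟨(v : H), hvΔ⟩) : ℂ) = b := by
      rw [hΔVE ⟨(v : H), hvΔ⟩, hsVinner_r]
    have hbre : 0 ≤ b.re ∧ b.im = 0 := by
      have := hΔpos ⟨(v : H), hvΔ⟩
      rwa [hb'] at this
    -- q_E z = 2a - 2b
    have hq : (inner ℂ (z : H) (E z) : ℂ) = 2 * a - 2 * b := by
      have hEz : E z = E v - V (E v) := by
        rw [hzdef]; rw [E.map_sub v Vv, show E Vv = V (E v) from hVEval v]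
      have hz1 : (z : H) = (v : H) - V (v : H) := rfl
      rw [hEz, hz1, inner_sub_left, inner_sub_right, inner_sub_right]
      have e1 : (inner ℂ ((v : H)) (V (E v)) : ℂ) = b := by
        rw [← comm' v, hsVinner_r]
      have e2 : (inner ℂ (V (v : H)) (V (E v)) : ℂ) = a := hVinner _ _
      rw [e1, e2]
      ring
    have hqpos := hEpos z
    -- conclude q_E z = 0
    have hab : a.re = b.re := by
      have h1 : 0 ≤ 2 * a.re - 2 * b.re := by
        have := hqpos.1
        rw [hq] at this
        simpa using this
      have h2 : 0 ≤ 2 * b.re - 2 * a.re := by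
        have := hbpos.1
        rw [hb] at this
        simpa using this
      linarith
    have haim : a.im = b.im := by
      have h1 := hqpos.2
      rw [hq] at h1
      simp at h1
      linarith [ha.2, hbre.2]
    have hqzero : (inner ℂ (z : H) (E z) : ℂ) = 0 := by
      rw [hq]
      apply Complex.ext <;> simp [hab, haim]
    -- Cauchy-Schwarz trick: E z = 0
    have hEz0 : E z = 0 := by
      have hinner : ∀ u : E.domain, (inner ℂ (u : H) (E z) : ℂ) = 0 := by
        have hre : ∀ u : E.domain, (inner ℂ (u : H) (E z) : ℂ).re = 0 := by
          intro u
          refine aux_quad ((inner ℂ (u : H) (E u) : ℂ)).re _ (hEpos u).1 (fun t => ?_)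
          have hy := hEpos ((t : ℂ) • u + z)
          have hEy : E ((t : ℂ) • u + z) = (t : ℂ) • E u + E z := by
            rw [E.map_add, E.map_smul]
          have hyv : (((t : ℂ) • u + z : E.domain) : H) = (t : ℂ) • (u : H) + (z : H) := rfl
          have hexp : (inner ℂ (((t : ℂ) • u + z : E.domain) : H) (E ((t : ℂ) • u + z)) : ℂ) =
              (t : ℂ) ^ 2 * inner ℂ (u : H) (E u) + (t : ℂ) * inner ℂ (u : H) (E z)
              + (t : ℂ) * (starRingEnd ℂ) (inner ℂ (u : H) (E z)) := by
            rw [hEy, hyv, inner_add_left, inner_add_right, inner_add_right,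
              inner_smul_left, inner_smul_right, inner_smul_left, inner_smul_right]
            have hzu : (inner ℂ (z : H) (E u) : ℂ) = (starRingEnd ℂ) (inner ℂ (u : H) (E z)) := by
              rw [← symE z u, inner_conj_symm]
            rw [hzu, hqzero, Complex.conj_ofReal]
            ring
          have := hy.1
          have hre2 : ((t : ℂ) ^ 2 * inner ℂ (u : H) (E u) + (t : ℂ) * inner ℂ (u : H) (E z)
              + (t : ℂ) * (starRingEnd ℂ) (inner ℂ (u : H) (E z))).re
              = t ^ 2 * (inner ℂ (u : H) (E u) : ℂ).re + 2 * t * (inner ℂ (u : H) (E z) : ℂ).re := by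
            rw [show ((t : ℂ)) ^ 2 = ((t ^ 2 : ℝ) : ℂ) by push_cast; ring]
            simp only [Complex.add_re, Complex.re_ofReal_mul, Complex.conj_re]
            ring
          rw [hexp, hre2] at this
          exact this
        intro u
        have h1 := hre u
        have h2 := hre ((Complex.I : ℂ) • u)
        have h3 : (inner ℂ (((Complex.I : ℂ) • u : E.domain) : H) (E z) : ℂ)
            = -Complex.I * inner ℂ (u : H) (E z) := by
          have : (((Complex.I : ℂ) • u : E.domain) : H) = (Complex.I : ℂ) • (u : H) := rfl
          rw [this, inner_smul_left, Complex.conj_I]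
        rw [h3] at h2
        have him : (inner ℂ (u : H) (E z) : ℂ).im = 0 := by
          have h4 : (-Complex.I * inner ℂ (u : H) (E z) : ℂ).re
              = (inner ℂ (u : H) (E z) : ℂ).im := by
            simp [Complex.mul_re]
          rw [h4] at h2
          exact h2
        apply Complex.ext
        · simpa using h1
        · simpa using him
      have := hEdense.eq_zero_of_inner_right ℂ (x := E z) (fun u hu => hinner ⟨u, hu⟩)
      exact this
    have hEzz : E v - V (E v) = 0 := by
      rw [← hEz0, hzdef, E.map_sub, show E Vv = V (E v) from hVEval v]
    exact (sub_eq_zero.mp hEzz).symm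
  -- Δ = E
  have hΔeqE : Δ = E := by
    apply LinearPMap.ext eqdom
    intro x hx hy
    have hx' : (x : H) ∈ E.domain := hΔT₁.1 hx
    have h1 : Δ ⟨x, hx⟩ = (star V) (E ⟨(x : H), hx'⟩) := hΔVE ⟨x, hx⟩
    rw [h1]
    exact (congrArg (fun w : H => (star V) w) (fixVE ⟨(x : H), hx'⟩)).symm.trans (hsVV _)
  -- injectivity of Δ
  have hker : ∀ (v : H) (hv : v ∈ Δ.domain), Δ ⟨v, hv⟩ = 0 → v = 0 := by
    intro v hv hv0
    -- (v, 0) in the closure of the graph of R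
    have hvc : (v, (0 : H)) ∈ closure (R.graph : Set (H × H)) := by
      have h0 : (v, Δ ⟨v, hv⟩) ∈ Δ.graph := Δ.mem_graph ⟨v, hv⟩
      rw [hv0, hgraphΔ] at h0
      rwa [← Submodule.topologicalClosure_coe]
    obtain ⟨p, hp, hplim⟩ := mem_closure_iff_seq_limit.mp hvc
    -- extract operators
    have hxn : ∀ n, ∃ x : H →L[ℂ] H, x ∈ M₀ ∧ x Ω = (p n).1 ∧
        ∃ hd : (p n).1 ∈ Δ.domain, Δ ⟨(p n).1, hd⟩ = (p n).2 := by
      intro n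
      obtain ⟨y, hy1, hy2⟩ := (LinearPMap.mem_graph_iff _).mp (hp n)
      have hyS : (y : H) ∈ S' := y.2.1
      have hyΔ : (y : H) ∈ Δ.domain := y.2.2
      have hmap : ∃ x ∈ M₀, x Ω = (y : H) := by
        rw [hS'def] at hyS
        have : (fun x : H →L[ℂ] H => x Ω) '' M₀ ⊆
            ↑(Submodule.map
              ({ toFun := fun x : H →L[ℂ] H => x Ω,
                 map_add' := fun a b => rfl,
                 map_smul' := fun c a => rfl } : (H →L[ℂ] H) →ₗ[ℂ] H)
              (Subalgebra.toSubmodule M₀.toSubalgebra)) := by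
          rintro _ ⟨x, hx, rfl⟩
          exact ⟨x, hx, rfl⟩
        have h2 := Submodule.span_le.mpr this hyS
        obtain ⟨x, hx, hx2⟩ := h2
        exact ⟨x, hx, hx2⟩
      obtain ⟨x, hx, hx2⟩ := hmap
      refine ⟨x, hx, by rw [hx2, hy1], ?_⟩
      refine ⟨by rw [← hy1]; exact hyΔ, ?_⟩
      have h3 : R y = Δ ⟨(y : H), hyΔ⟩ := LinearPMap.domRestrict_apply rfl
      rw [← hy2, h3]
      exact congrArg (fun q : Δ.domain => Δ q) (Subtype.ext hy1.symm)
    choose x hxM hxΩ hdmem hΔval using hxn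
    set u : ℕ → H := fun n => (p n).1 with hudef
    set g : ℕ → H := fun n => (p n).2 with hgdef
    set w : ℕ → H := fun n => (star (x n)) Ω with hwdef
    have hulim : Filter.Tendsto u Filter.atTop (nhds v) :=
      (continuous_fst.tendsto (v, (0 : H))).comp hplim
    have hglim : Filter.Tendsto g Filter.atTop (nhds 0) :=
      (continuous_snd.tendsto (v, (0 : H))).comp hplim
    -- Cauchy estimate for w
    have hwcauchy : CauchySeq w := by
      apply aux_cauchy w u g hulim.cauchySeq hglim.cauchySeq
      intro n m
      set d : H →L[ℂ] H := x n - x m with hddef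
      have hdM : d ∈ M₀ := sub_mem (hxM n) (hxM m)
      have hwd : w n - w m = (star d) Ω := by
        rw [hwdef, hddef]
        simp [star_sub, ContinuousLinearMap.sub_apply]
      have hdΩ : d Ω = u n - u m := by
        rw [hddef]
        simp [ContinuousLinearMap.sub_apply, hxΩ n, hxΩ m, hudef]
      have hΔd : Δ ⟨d Ω, (hdom d hdM).1⟩ = g n - g m := by
        have h1 : (⟨d Ω, (hdom d hdM).1⟩ : Δ.domain)
            = ⟨u n, hdmem n⟩ - ⟨u m, hdmem m⟩ := Subtype.ext (by simpa using hdΩ)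
        rw [h1, Δ.map_sub, hΔval n, hΔval m]
      have hid := hmod d hdM d hdM
      have hnorm : (‖w n - w m‖ : ℝ) ^ 2 = ((inner ℂ (w n - w m) (w n - w m) : ℂ)).re := by
        rw [← inner_self_eq_norm_sq (𝕜 := ℂ)]; rfl
      rw [hnorm, hwd, hid, hΔd, hdΩ]
      calc ((inner ℂ (u n - u m) (g n - g m) : ℂ)).re
          ≤ ‖(inner ℂ (u n - u m) (g n - g m) : ℂ)‖ := Complex.re_le_norm _
        _ ≤ ‖u n - u m‖ * ‖g n - g m‖ := by
            exact norm_inner_le_norm _ _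
    obtain ⟨W, hWlim⟩ := cauchySeq_tendsto_of_complete hwcauchy
    -- W = 0
    have hW0 : W = (0 : H) := by
      have hgen : ∀ y ∈ M₀, (inner ℂ W ((star y) Ω) : ℂ) = 0 := by
        intro y hy
        have hseq : Filter.Tendsto (fun n => (inner ℂ (w n) ((star y) Ω) : ℂ))
            Filter.atTop (nhds (inner ℂ W ((star y) Ω))) :=
          hWlim.inner tendsto_const_nhds
        have hval : ∀ n, (inner ℂ (w n) ((star y) Ω) : ℂ) = inner ℂ (y Ω) (g n) := by
          intro n
          have h1 := hmod y hy (x n) (hxM n)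
          rw [hwdef]
          rw [h1]
          congr 1
          have h6 : Δ ⟨(x n) Ω, (hdom (x n) (hxM n)).1⟩ = (p n).2 := by
            rw [← hΔval n]
            exact congrArg (fun q : Δ.domain => Δ q) (Subtype.ext (hxΩ n))
          exact h6
        have hseq2 : Filter.Tendsto (fun n => (inner ℂ (y Ω) (g n) : ℂ))
            Filter.atTop (nhds 0) := by
          have h7 : Filter.Tendsto (fun n => (inner ℂ (y Ω) (g n) : ℂ))
              Filter.atTop (nhds (inner ℂ (y Ω) (0 : H))) :=
            Filter.Tendsto.inner tendsto_const_nhds hglim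
          simpa using h7
        rw [show (fun n => (inner ℂ (w n) ((star y) Ω) : ℂ)) = fun n => inner ℂ (y Ω) (g n)
          from funext hval] at hseq
        exact tendsto_nhds_unique hseq hseq2
      have hall : ∀ s : S', (inner ℂ W (s : H) : ℂ) = 0 := by
        intro s
        have hK : S' ≤ LinearMap.ker (innerSL ℂ W : H →ₗ[ℂ] ℂ) := by
          rw [hS'def, Submodule.span_le]
          rintro _ ⟨t, ht, rfl⟩
          have := hgen (star t) (star_mem ht)
          simp only [star_star] at this
          simpa using this
        simpa using hK s.2
      exact hS'dense.eq_zero_of_inner_left ℂ (fun s hs => hall ⟨s, hs⟩)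
    -- ⟪u n, v⟫ = 0 for all n
    have hwdom : ∀ n, w n ∈ Δ.domain := fun n => (hdom (star (x n)) (star_mem (hxM n))).1
    have hun : ∀ n, (inner ℂ (u n) v : ℂ) = 0 := by
      intro n
      have hval : ∀ m, (inner ℂ (u n) (u m) : ℂ) = inner ℂ (w m) (Δ ⟨w n, hwdom n⟩) := by
        intro m
        have h1 := hmod (star (x m)) (star_mem (hxM m)) (star (x n)) (star_mem (hxM n))
        simp only [star_star] at h1
        calc (inner ℂ (u n) (u m) : ℂ)
            = inner ℂ ((x n) Ω) ((x m) Ω) := by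
              rw [show u n = (x n) Ω from (hxΩ n).symm, show u m = (x m) Ω from (hxΩ m).symm]
          _ = inner ℂ ((star (x m)) Ω)
              (Δ ⟨(star (x n)) Ω, (hdom (star (x n)) (star_mem (hxM n))).1⟩) := h1
          _ = inner ℂ (w m) (Δ ⟨w n, hwdom n⟩) := rfl
      have hseq1 : Filter.Tendsto (fun m => (inner ℂ (u n) (u m) : ℂ))
          Filter.atTop (nhds (inner ℂ (u n) v)) :=
        Filter.Tendsto.inner tendsto_const_nhds hulim
      have hseq2 : Filter.Tendsto (fun m => (inner ℂ (w m) (Δ ⟨w n, hwdom n⟩) : ℂ))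
          Filter.atTop (nhds (inner ℂ W (Δ ⟨w n, hwdom n⟩))) :=
        Filter.Tendsto.inner hWlim tendsto_const_nhds
      rw [show (fun m => (inner ℂ (u n) (u m) : ℂ))
        = fun m => inner ℂ (w m) (Δ ⟨w n, hwdom n⟩) from funext hval] at hseq1
      have := tendsto_nhds_unique hseq1 hseq2
      rw [this, hW0, inner_zero_left]
    have hfinal : Filter.Tendsto (fun n => (inner ℂ (u n) v : ℂ))
        Filter.atTop (nhds (inner ℂ v v)) :=
      Filter.Tendsto.inner hulim tendsto_const_nhds
    rw [show (fun n => (inner ℂ (u n) v : ℂ)) = fun _ => 0 from funext hun] at hfinal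
    have h0 : (inner ℂ v v : ℂ) = 0 := tendsto_nhds_unique hfinal tendsto_const_nhds
    exact inner_self_eq_zero.mp h0
  -- V = 1
  refine ⟨hΔeqE, ?_⟩
  -- V fixes the range of Δ
  have hfixΔ : ∀ vd : Δ.domain, V (Δ vd) = Δ vd := by
    intro vd
    have hx' : (vd : H) ∈ E.domain := hΔT₁.1 vd.2
    have hq := fixVE ⟨(vd : H), hx'⟩
    rw [hΔVE vd, comm' ⟨(vd : H), hx'⟩, hq]
    exact hq
  -- dense range
  set K : Submodule ℂ H := LinearMap.range Δ.toFun with hKdef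
  have hKdense : Dense (K : Set H) := by
    rw [Submodule.dense_iff_topologicalClosure_eq_top, Submodule.topologicalClosure_eq_top_iff]
    rw [Submodule.eq_bot_iff]
    intro uu huu
    rw [Submodule.mem_orthogonal] at huu
    have hmem : uu ∈ Δ.adjoint.domain := by
      apply LinearPMap.mem_adjoint_domain_of_exists
      refine ⟨0, fun xd => ?_⟩
      rw [inner_zero_left]
      have := huu (Δ xd) ⟨xd, rfl⟩
      rw [← inner_conj_symm, this, map_zero]
    have hval : Δ.adjoint ⟨uu, hmem⟩ = 0 := by
      apply LinearPMap.adjoint_apply_eq hΔdense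
      intro xd
      rw [inner_zero_left]
      have := huu (Δ xd) ⟨xd, rfl⟩
      rw [← inner_conj_symm, this, map_zero]
    have hgr : (uu, (0 : H)) ∈ Δ.adjoint.graph := by
      have := Δ.adjoint.mem_graph ⟨uu, hmem⟩
      rwa [hval] at this
    rw [hΔsa] at hgr
    obtain ⟨yd, hy1, hy2⟩ := (LinearPMap.mem_graph_iff _).mp hgr
    have : (yd : H) = 0 := by
      apply hker (yd : H) yd.2
      rw [show (⟨(yd : H), yd.2⟩ : Δ.domain) = yd from rfl]
      exact hy2
    exact (hy1.symm.trans this : uu = 0)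
  have hVeq : ⇑V = ⇑(1 : H →L[ℂ] H) := by
    apply Continuous.ext_on hKdense V.continuous (1 : H →L[ℂ] H).continuous
    rintro _ ⟨vd, rfl⟩
    simpa using hfixΔ vd
  exact ContinuousLinearMap.ext fun x => congrFun hVeq x
end

section
/- Let M be a von Neumann algebra with separating vector Ω whose linear span M'Ω is dense, and let β̃_n ∈ Aut(M) be unitarily implemented automorphisms fixing Ω. Suppose for all a, b in a σ-strongly* dense unital *-subalgebra A ⊆ M the twisted commutators [a, β̃_n(b)] = a β̃_n(b) − γ̃(β̃_n(b)) a converge weakly to 0. Then [x, β̃_n(y)] → 0 weakly for all x, y ∈ M. -/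
open Complex Filter

variable {H : Type*} [NormedAddCommGroup H] [InnerProductSpace ℂ H] [CompleteSpace H]

lemma stmt11_isom (U : H →L[ℂ] H) (h : star U * U = 1) (ξ : H) : ‖U ξ‖ = ‖ξ‖ := by
  have h1 : (inner ℂ (U ξ) (U ξ) : ℂ) = inner ℂ ξ ξ := by
    rw [← ContinuousLinearMap.adjoint_inner_left U ξ (U ξ), ← ContinuousLinearMap.star_eq_adjoint,
      ← ContinuousLinearMap.mul_apply, h, ContinuousLinearMap.one_apply]
  rw [inner_self_eq_norm_sq_to_K, inner_self_eq_norm_sq_to_K] at h1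
  have h3 : ‖U ξ‖ ^ 2 = ‖ξ‖ ^ 2 := by exact_mod_cast h1
  nlinarith [norm_nonneg (U ξ), norm_nonneg ξ]

lemma stmt11_tendsto_of_approx (f : ℕ → ℂ)
    (h : ∀ ε > (0:ℝ), ∃ g : ℕ → ℂ, Tendsto g atTop (nhds 0) ∧ ∀ n, ‖f n - g n‖ ≤ ε) :
    Tendsto f atTop (nhds 0) := by
  rw [NormedAddCommGroup.tendsto_nhds_zero]
  intro ε hε
  obtain ⟨g, hg, hfg⟩ := h (ε / 2) (by linarith)
  have := (NormedAddCommGroup.tendsto_nhds_zero.mp hg) (ε / 2) (by linarith)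
  filter_upwards [this] with n hn
  calc ‖f n‖ ≤ ‖f n - g n‖ + ‖g n‖ := by
        simpa using norm_add_le (f n - g n) (g n)
    _ < ε / 2 + ε / 2 := by linarith [hfg n]
    _ = ε := by ring

lemma stmt11_tendsto_of_dense (f : ℕ → H → ℂ) (D : Set H) (hD : Dense D) (C : ℝ) (hC : 0 ≤ C)
    (hlip : ∀ n u u', ‖f n u - f n u'‖ ≤ C * ‖u - u'‖)
    (h0 : ∀ u ∈ D, Tendsto (fun n => f n u) atTop (nhds 0)) (u : H) :
    Tendsto (fun n => f n u) atTop (nhds 0) := by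
  apply stmt11_tendsto_of_approx
  intro ε hε
  have hC0 : (0:ℝ) < C + 1 := by linarith
  obtain ⟨u', hu'D⟩ := Metric.dense_iff.mp hD u (ε / (C + 1)) (by positivity)
  refine ⟨fun n => f n u', h0 u' hu'D.2, fun n => ?_⟩
  have h1 : ‖u - u'‖ ≤ ε / (C + 1) := by
    have := hu'D.1
    rw [Metric.mem_ball, dist_comm] at this
    simpa [dist_eq_norm] using this.le
  calc ‖f n u - f n u'‖ ≤ C * ‖u - u'‖ := hlip n u u'
    _ ≤ C * (ε / (C + 1)) := by gcongr
    _ ≤ ε := by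
        rw [div_eq_inv_mul, ← mul_assoc]
        nlinarith [mul_le_of_le_one_left (le_of_lt hε) (show C * (C+1)⁻¹ ≤ 1 by
          rw [mul_inv_le_iff₀ hC0]; linarith)]

lemma stmt11_norm4 (a b c d : ℂ) : ‖a + b - c - d‖ ≤ ‖a‖ + ‖b‖ + ‖c‖ + ‖d‖ := by
  have h1 := norm_sub_le (a + b - c) d
  have h2 := norm_sub_le (a + b) c
  have h3 := norm_add_le a b
  linarith

set_option maxHeartbeats 1000000 in
/-- if the twisted commutators `[a, β̃ₙ(b)] = a β̃ₙ(b) − γ̃(β̃ₙ(b)) a`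
tend weakly to `0` for `a, b` in a σ-strongly* dense unital *-subalgebra `A` of
`M`, where each `β̃ₙ = Ad(Wₙ)` fixes `Ω` (a vector separating for `M` and cyclic
both for `M` and `M'`), then they tend weakly to `0` for all `x, y ∈ M`. -/
theorem stmt11 (M : VonNeumannAlgebra H) (Ω : H)
    (hcyc : Dense ((fun x : H →L[ℂ] H => x Ω) '' (M : Set (H →L[ℂ] H))))
    (hcyc' : Dense ((fun x : H →L[ℂ] H => x Ω) '' {x | ∀ y ∈ M, x * y = y * x}))
    (hsep : ∀ x ∈ M, x Ω = 0 → x = 0)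
    -- the twist, implemented by a unitary fixing Ω
    (V : H →L[ℂ] H) (hVu : V ∈ unitary (H →L[ℂ] H)) (hVΩ : V Ω = Ω)
    (hVM : ∀ x ∈ M, V * x * star V ∈ M)
    -- the automorphisms β̃ₙ, implemented by unitaries fixing Ω
    (W : ℕ → H →L[ℂ] H) (hWu : ∀ n, W n ∈ unitary (H →L[ℂ] H))
    (hWΩ : ∀ n, W n Ω = Ω)
    (hWM : ∀ n, ∀ x ∈ M, W n * x * star (W n) ∈ M)
    -- a σ-strongly* dense unital *-subalgebra A of M
    (A : StarSubalgebra ℂ (H →L[ℂ] H)) (hAM : (A : Set (H →L[ℂ] H)) ⊆ M)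
    (hdense : ∀ x ∈ M, ‖x‖ ≤ 1 → ∀ ε > 0, ∀ s : Finset H,
      ∃ a ∈ A, ‖a‖ ≤ 1 ∧ ∀ v ∈ s, ‖(a - x) v‖ < ε ∧ ‖(star a - star x) v‖ < ε)
    -- weak convergence of twisted commutators on A
    (hA : ∀ a ∈ A, ∀ b ∈ A, ∀ v w : H,
      Tendsto (fun n =>
        (inner ℂ w ((a * (W n * b * star (W n)) -
          (V * (W n * b * star (W n)) * star V) * a) v) : ℂ)) atTop (nhds 0)) :
    ∀ x ∈ M, ∀ y ∈ M, ∀ v w : H,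
      Tendsto (fun n =>
        (inner ℂ w ((x * (W n * y * star (W n)) -
          (V * (W n * y * star (W n)) * star V) * x) v) : ℂ)) atTop (nhds 0) := by
  -- basic unitarity facts
  obtain ⟨hV1, hV2⟩ := Unitary.mem_iff.mp hVu
  have hWun : ∀ n, star (W n) * W n = 1 ∧ W n * star (W n) = 1 :=
    fun n => Unitary.mem_iff.mp (hWu n)
  have hWiso : ∀ n ξ, ‖W n ξ‖ = ‖ξ‖ := fun n => stmt11_isom _ (hWun n).1
  have hWsiso : ∀ n ξ, ‖star (W n) ξ‖ = ‖ξ‖ := fun n =>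
    stmt11_isom _ (by simpa using (hWun n).2)
  have hViso : ∀ ξ, ‖V ξ‖ = ‖ξ‖ := stmt11_isom _ hV1
  have hVsiso : ∀ ξ, ‖star V ξ‖ = ‖ξ‖ := stmt11_isom _ (by simpa using hV2)
  have hWsΩ : ∀ n, star (W n) Ω = Ω := by
    intro n
    conv_lhs => rw [← hWΩ n]
    rw [← ContinuousLinearMap.mul_apply, (hWun n).1, ContinuousLinearMap.one_apply]
  have hVsΩ : star V Ω = Ω := by
    conv_lhs => rw [← hVΩ]
    rw [← ContinuousLinearMap.mul_apply, hV1, ContinuousLinearMap.one_apply]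
  -- pointwise bounds for conjugated operators
  have hconjW : ∀ n (c : H →L[ℂ] H) ξ, ‖(W n * c * star (W n)) ξ‖ ≤ ‖c‖ * ‖ξ‖ := by
    intro n c ξ
    rw [ContinuousLinearMap.mul_apply, ContinuousLinearMap.mul_apply, hWiso]
    calc ‖c (star (W n) ξ)‖ ≤ ‖c‖ * ‖star (W n) ξ‖ := c.le_opNorm _
      _ = ‖c‖ * ‖ξ‖ := by rw [hWsiso]
  have hconjV : ∀ n (c : H →L[ℂ] H) ξ,
      ‖(V * (W n * c * star (W n)) * star V) ξ‖ ≤ ‖c‖ * ‖ξ‖ := by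
    intro n c ξ
    rw [ContinuousLinearMap.mul_apply, ContinuousLinearMap.mul_apply, hViso]
    calc ‖(W n * c * star (W n)) (star V ξ)‖ ≤ ‖c‖ * ‖star V ξ‖ := hconjW n c _
      _ = ‖c‖ * ‖ξ‖ := by rw [hVsiso]
  -- Ω-evaluations
  have hβΩ : ∀ n (c : H →L[ℂ] H), (W n * c * star (W n)) Ω = W n (c Ω) := by
    intro n c
    rw [ContinuousLinearMap.mul_apply, ContinuousLinearMap.mul_apply, hWsΩ]
  have hγβΩ : ∀ n (c : H →L[ℂ] H),
      (V * (W n * c * star (W n)) * star V) Ω = V (W n (c Ω)) := by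
    intro n c
    rw [ContinuousLinearMap.mul_apply, hVsΩ, ContinuousLinearMap.mul_apply, hβΩ]
  -- the key statement, for contractions
  have key : ∀ x ∈ M, ‖x‖ ≤ 1 → ∀ y ∈ M, ‖y‖ ≤ 1 → ∀ v w : H,
      Tendsto (fun n =>
        (inner ℂ w ((x * (W n * y * star (W n)) -
          (V * (W n * y * star (W n)) * star V) * x) v) : ℂ)) atTop (nhds 0) := by
    intro x hx hx1 y hy hy1
    -- uniform pointwise bound on the twisted commutators
    have hTptw : ∀ n ξ, ‖(x * (W n * y * star (W n)) -
        (V * (W n * y * star (W n)) * star V) * x) ξ‖ ≤ 2 * ‖ξ‖ := by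
      intro n ξ
      rw [ContinuousLinearMap.sub_apply, ContinuousLinearMap.mul_apply,
        ContinuousLinearMap.mul_apply]
      have b1 : ‖x ((W n * y * star (W n)) ξ)‖ ≤ ‖ξ‖ := by
        calc ‖x ((W n * y * star (W n)) ξ)‖ ≤ ‖x‖ * ‖(W n * y * star (W n)) ξ‖ :=
              x.le_opNorm _
          _ ≤ 1 * (‖y‖ * ‖ξ‖) := by
              exact mul_le_mul hx1 (hconjW n y ξ) (norm_nonneg _) zero_le_one
          _ ≤ 1 * (1 * ‖ξ‖) := by
              have := norm_nonneg ξ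
              gcongr
          _ = ‖ξ‖ := by ring
      have b2 : ‖(V * (W n * y * star (W n)) * star V) (x ξ)‖ ≤ ‖ξ‖ := by
        calc ‖(V * (W n * y * star (W n)) * star V) (x ξ)‖ ≤ ‖y‖ * ‖x ξ‖ := hconjV n y _
          _ ≤ 1 * (‖x‖ * ‖ξ‖) := by
              exact mul_le_mul hy1 (x.le_opNorm ξ) (norm_nonneg _) zero_le_one
          _ ≤ 1 * (1 * ‖ξ‖) := by
              have := norm_nonneg ξ
              gcongr
          _ = ‖ξ‖ := by ring
      calc ‖x ((W n * y * star (W n)) ξ) - (V * (W n * y * star (W n)) * star V) (x ξ)‖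
          ≤ ‖x ((W n * y * star (W n)) ξ)‖ + ‖(V * (W n * y * star (W n)) * star V) (x ξ)‖ :=
            norm_sub_le _ _
        _ ≤ 2 * ‖ξ‖ := by linarith
    -- Step 1 : matrix elements against Ω and z'Ω, z' in the commutant
    have base : ∀ z' : H →L[ℂ] H, (∀ m ∈ M, z' * m = m * z') →
        Tendsto (fun n =>
          (inner ℂ (z' Ω) ((x * (W n * y * star (W n)) -
            (V * (W n * y * star (W n)) * star V) * x) Ω) : ℂ)) atTop (nhds 0) := by
      intro z' hz'
      apply stmt11_tendsto_of_approx
      intro ε hε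
      set K : ℝ := ‖z'‖ * (‖Ω‖ + 1) + 1 with hK
      have hKpos : (0:ℝ) < K := by positivity
      have hzΩK : ‖z'‖ * ‖Ω‖ ≤ K := by nlinarith [norm_nonneg z', norm_nonneg Ω]
      have hzΩ' : ‖z' Ω‖ ≤ ‖z'‖ * ‖Ω‖ := z'.le_opNorm Ω
      set δ : ℝ := ε / (4 * K) with hδdef
      have hδ : (0:ℝ) < δ := by positivity
      obtain ⟨a, haA, ha1, haΩ'⟩ := hdense x hx hx1 δ hδ {Ω}
      obtain ⟨b, hbA, hb1, hbΩ'⟩ := hdense y hy hy1 δ hδ {Ω}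
      have haΩ1 : ‖(a - x) Ω‖ < δ := (haΩ' Ω (by simp)).1
      have haΩ2 : ‖(star a - star x) Ω‖ < δ := (haΩ' Ω (by simp)).2
      have hbΩ1 : ‖(b - y) Ω‖ < δ := (hbΩ' Ω (by simp)).1
      have hbΩ2 : ‖(star b - star y) Ω‖ < δ := (hbΩ' Ω (by simp)).2
      refine ⟨_, hA a haA b hbA Ω (z' Ω), fun n => ?_⟩
      -- operator identity
      have hop : (x * (W n * y * star (W n)) - (V * (W n * y * star (W n)) * star V) * x) -
          (a * (W n * b * star (W n)) - (V * (W n * b * star (W n)) * star V) * a) =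
          ((x - a) * (W n * y * star (W n))) + (a * (W n * (y - b) * star (W n))) -
          ((V * (W n * (y - b) * star (W n)) * star V) * x) -
          ((V * (W n * b * star (W n)) * star V) * (x - a)) := by
        noncomm_ring
      have hsplit : (inner ℂ (z' Ω) ((x * (W n * y * star (W n)) -
            (V * (W n * y * star (W n)) * star V) * x) Ω) : ℂ) -
            inner ℂ (z' Ω) ((a * (W n * b * star (W n)) -
            (V * (W n * b * star (W n)) * star V) * a) Ω) =
          inner ℂ (z' Ω) (((x - a) * (W n * y * star (W n))) Ω) +
          inner ℂ (z' Ω) ((a * (W n * (y - b) * star (W n))) Ω) -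
          inner ℂ (z' Ω) (((V * (W n * (y - b) * star (W n)) * star V) * x) Ω) -
          inner ℂ (z' Ω) (((V * (W n * b * star (W n)) * star V) * (x - a)) Ω) := by
        rw [← inner_sub_right, ← ContinuousLinearMap.sub_apply, hop]
        simp [ContinuousLinearMap.add_apply, ContinuousLinearMap.sub_apply,
          inner_add_right, inner_sub_right]
      rw [hsplit]
      -- bound the four terms
      have hI1 : ‖(inner ℂ (z' Ω) (((x - a) * (W n * y * star (W n))) Ω) : ℂ)‖ ≤ K * δ := by
        have e1 : ((x - a) * (W n * y * star (W n))) Ω = (x - a) (W n (y Ω)) := by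
          rw [ContinuousLinearMap.mul_apply, hβΩ]
        have hmem : star x - star a ∈ M := sub_mem (star_mem hx) (star_mem (hAM haA))
        have e2 : (star (x - a)) (z' Ω) = z' ((star x - star a) Ω) := by
          rw [star_sub, ← ContinuousLinearMap.mul_apply (star x - star a) z',
            ← hz' _ hmem, ContinuousLinearMap.mul_apply]
        rw [e1, ← ContinuousLinearMap.adjoint_inner_left, ← ContinuousLinearMap.star_eq_adjoint,
          e2]
        calc ‖(inner ℂ (z' ((star x - star a) Ω)) (W n (y Ω)) : ℂ)‖
            ≤ ‖z' ((star x - star a) Ω)‖ * ‖W n (y Ω)‖ := norm_inner_le_norm _ _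
          _ ≤ (‖z'‖ * δ) * ‖Ω‖ := by
              have e3 : ‖(star x - star a) Ω‖ ≤ δ := by
                rw [(neg_sub (star a) (star x)).symm, ContinuousLinearMap.neg_apply,
                  norm_neg]
                exact haΩ2.le
              have e4 : ‖W n (y Ω)‖ ≤ ‖Ω‖ := by
                rw [hWiso]
                calc ‖y Ω‖ ≤ ‖y‖ * ‖Ω‖ := y.le_opNorm Ω
                  _ ≤ 1 * ‖Ω‖ := by gcongr
                  _ = ‖Ω‖ := one_mul _
              have e5 : ‖z' ((star x - star a) Ω)‖ ≤ ‖z'‖ * δ := by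
                calc ‖z' ((star x - star a) Ω)‖ ≤ ‖z'‖ * ‖(star x - star a) Ω‖ :=
                      z'.le_opNorm _
                  _ ≤ ‖z'‖ * δ := by gcongr
              exact mul_le_mul e5 e4 (norm_nonneg _) (by positivity)
          _ ≤ K * δ := by nlinarith [norm_nonneg Ω, norm_nonneg z']
      have hI2 : ‖(inner ℂ (z' Ω) ((a * (W n * (y - b) * star (W n))) Ω) : ℂ)‖ ≤ K * δ := by
        have e1 : (a * (W n * (y - b) * star (W n))) Ω = a (W n ((y - b) Ω)) := by
          rw [ContinuousLinearMap.mul_apply, hβΩ]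
        rw [e1]
        calc ‖(inner ℂ (z' Ω) (a (W n ((y - b) Ω))) : ℂ)‖
            ≤ ‖z' Ω‖ * ‖a (W n ((y - b) Ω))‖ := norm_inner_le_norm _ _
          _ ≤ (‖z'‖ * ‖Ω‖) * (1 * δ) := by
              have e2 : ‖a (W n ((y - b) Ω))‖ ≤ 1 * δ := by
                calc ‖a (W n ((y - b) Ω))‖ ≤ ‖a‖ * ‖W n ((y - b) Ω)‖ := a.le_opNorm _
                  _ ≤ 1 * δ := by
                      rw [hWiso]
                      have : ‖(y - b) Ω‖ ≤ δ := by
                        rw [(neg_sub b y).symm, ContinuousLinearMap.neg_apply,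
                          norm_neg]
                        exact hbΩ1.le
                      exact mul_le_mul ha1 this (norm_nonneg _) zero_le_one
              exact mul_le_mul hzΩ' e2 (norm_nonneg _) (by positivity)
          _ ≤ K * δ := by nlinarith
      have hI3 : ‖(inner ℂ (z' Ω) (((V * (W n * (y - b) * star (W n)) * star V) * x) Ω) : ℂ)‖
          ≤ K * δ := by
        have e1 : ((V * (W n * (y - b) * star (W n)) * star V) * x) Ω =
            (V * (W n * (y - b) * star (W n)) * star V) (x Ω) := by
          rw [ContinuousLinearMap.mul_apply]
        have hstar : star (V * (W n * (y - b) * star (W n)) * star V) =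
            V * (W n * (star y - star b) * star (W n)) * star V := by
          simp only [star_sub, star_mul, star_star, mul_assoc]
        have hmem : V * (W n * (star y - star b) * star (W n)) * star V ∈ M :=
          hVM _ (hWM n _ (sub_mem (star_mem hy) (star_mem (hAM hbA))))
        have e2 : (V * (W n * (star y - star b) * star (W n)) * star V) (z' Ω) =
            z' (V (W n ((star y - star b) Ω))) := by
          rw [← ContinuousLinearMap.mul_apply _ z', ← hz' _ hmem,
            ContinuousLinearMap.mul_apply, hγβΩ]
        rw [e1, ← ContinuousLinearMap.adjoint_inner_left, ← ContinuousLinearMap.star_eq_adjoint,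
          hstar, e2]
        calc ‖(inner ℂ (z' (V (W n ((star y - star b) Ω)))) (x Ω) : ℂ)‖
            ≤ ‖z' (V (W n ((star y - star b) Ω)))‖ * ‖x Ω‖ := norm_inner_le_norm _ _
          _ ≤ (‖z'‖ * δ) * ‖Ω‖ := by
              have e3 : ‖(star y - star b) Ω‖ ≤ δ := by
                rw [(neg_sub (star b) (star y)).symm,
                  ContinuousLinearMap.neg_apply, norm_neg]
                exact hbΩ2.le
              have e4 : ‖z' (V (W n ((star y - star b) Ω)))‖ ≤ ‖z'‖ * δ := by
                calc ‖z' (V (W n ((star y - star b) Ω)))‖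
                    ≤ ‖z'‖ * ‖V (W n ((star y - star b) Ω))‖ := z'.le_opNorm _
                  _ ≤ ‖z'‖ * δ := by rw [hViso, hWiso]; gcongr
              have e5 : ‖x Ω‖ ≤ ‖Ω‖ := by
                calc ‖x Ω‖ ≤ ‖x‖ * ‖Ω‖ := x.le_opNorm Ω
                  _ ≤ 1 * ‖Ω‖ := by gcongr
                  _ = ‖Ω‖ := one_mul _
              exact mul_le_mul e4 e5 (norm_nonneg _) (by positivity)
          _ ≤ K * δ := by nlinarith [norm_nonneg Ω, norm_nonneg z']
      have hI4 : ‖(inner ℂ (z' Ω) (((V * (W n * b * star (W n)) * star V) * (x - a)) Ω) : ℂ)‖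
          ≤ K * δ := by
        have e1 : ((V * (W n * b * star (W n)) * star V) * (x - a)) Ω =
            (V * (W n * b * star (W n)) * star V) ((x - a) Ω) := by
          rw [ContinuousLinearMap.mul_apply]
        rw [e1]
        calc ‖(inner ℂ (z' Ω) ((V * (W n * b * star (W n)) * star V) ((x - a) Ω)) : ℂ)‖
            ≤ ‖z' Ω‖ * ‖(V * (W n * b * star (W n)) * star V) ((x - a) Ω)‖ :=
              norm_inner_le_norm _ _
          _ ≤ (‖z'‖ * ‖Ω‖) * (1 * δ) := by
              have e2 : ‖(V * (W n * b * star (W n)) * star V) ((x - a) Ω)‖ ≤ 1 * δ := by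
                calc ‖(V * (W n * b * star (W n)) * star V) ((x - a) Ω)‖
                    ≤ ‖b‖ * ‖(x - a) Ω‖ := hconjV n b _
                  _ ≤ 1 * δ := by
                      have : ‖(x - a) Ω‖ ≤ δ := by
                        rw [(neg_sub a x).symm, ContinuousLinearMap.neg_apply,
                          norm_neg]
                        exact haΩ1.le
                      exact mul_le_mul hb1 this (norm_nonneg _) zero_le_one
              exact mul_le_mul hzΩ' e2 (norm_nonneg _) (by positivity)
          _ ≤ K * δ := by nlinarith
      calc ‖(inner ℂ (z' Ω) (((x - a) * (W n * y * star (W n))) Ω) : ℂ) +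
            inner ℂ (z' Ω) ((a * (W n * (y - b) * star (W n))) Ω) -
            inner ℂ (z' Ω) (((V * (W n * (y - b) * star (W n)) * star V) * x) Ω) -
            inner ℂ (z' Ω) (((V * (W n * b * star (W n)) * star V) * (x - a)) Ω)‖
          ≤ ‖(inner ℂ (z' Ω) (((x - a) * (W n * y * star (W n))) Ω) : ℂ)‖ +
            ‖(inner ℂ (z' Ω) ((a * (W n * (y - b) * star (W n))) Ω) : ℂ)‖ +
            ‖(inner ℂ (z' Ω) (((V * (W n * (y - b) * star (W n)) * star V) * x) Ω) : ℂ)‖ +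
            ‖(inner ℂ (z' Ω) (((V * (W n * b * star (W n)) * star V) * (x - a)) Ω) : ℂ)‖ := by
            exact stmt11_norm4 _ _ _ _
        _ ≤ K * δ + K * δ + K * δ + K * δ := by linarith
        _ = ε := by
            rw [hδdef]
            field_simp
            ring
    -- Step 2 : matrix elements against Ω and arbitrary w
    have stepw : ∀ w : H, Tendsto (fun n =>
        (inner ℂ w ((x * (W n * y * star (W n)) -
          (V * (W n * y * star (W n)) * star V) * x) Ω) : ℂ)) atTop (nhds 0) := by
      intro w
      apply stmt11_tendsto_of_dense
        (fun n u => (inner ℂ u ((x * (W n * y * star (W n)) -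
          (V * (W n * y * star (W n)) * star V) * x) Ω) : ℂ))
        ((fun x : H →L[ℂ] H => x Ω) '' {x | ∀ y ∈ M, x * y = y * x}) hcyc' (2 * ‖Ω‖)
        (by positivity)
      · intro n u u'
        rw [← inner_sub_left]
        calc ‖(inner ℂ (u - u') ((x * (W n * y * star (W n)) -
              (V * (W n * y * star (W n)) * star V) * x) Ω) : ℂ)‖
            ≤ ‖u - u'‖ * ‖(x * (W n * y * star (W n)) -
              (V * (W n * y * star (W n)) * star V) * x) Ω‖ := norm_inner_le_norm _ _
          _ ≤ ‖u - u'‖ * (2 * ‖Ω‖) := by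
              have := hTptw n Ω
              gcongr
          _ = 2 * ‖Ω‖ * ‖u - u'‖ := by ring
      · rintro u ⟨z', hz', rfl⟩
        exact base z' hz'
    -- Step 3 : arbitrary v and w
    intro v w
    apply stmt11_tendsto_of_dense
      (fun n u => (inner ℂ w ((x * (W n * y * star (W n)) -
        (V * (W n * y * star (W n)) * star V) * x) u) : ℂ))
      ((fun x : H →L[ℂ] H => x Ω) '' {x | ∀ y ∈ M, x * y = y * x}) hcyc' (2 * ‖w‖)
      (by positivity)
    · intro n u u'
      rw [← inner_sub_right, ← map_sub]
      calc ‖(inner ℂ w ((x * (W n * y * star (W n)) -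
            (V * (W n * y * star (W n)) * star V) * x) (u - u')) : ℂ)‖
          ≤ ‖w‖ * ‖(x * (W n * y * star (W n)) -
            (V * (W n * y * star (W n)) * star V) * x) (u - u')‖ := norm_inner_le_norm _ _
        _ ≤ ‖w‖ * (2 * ‖u - u'‖) := by
            have := hTptw n (u - u')
            gcongr
        _ = 2 * ‖w‖ * ‖u - u'‖ := by ring
    · rintro u ⟨c', hc', rfl⟩
      have hmemT : ∀ n, x * (W n * y * star (W n)) -
          (V * (W n * y * star (W n)) * star V) * x ∈ M := fun n =>
        sub_mem (mul_mem hx (hWM n y hy)) (mul_mem (hVM _ (hWM n y hy)) hx)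
      have heq : ∀ n, (inner ℂ w ((x * (W n * y * star (W n)) -
          (V * (W n * y * star (W n)) * star V) * x) (c' Ω)) : ℂ) =
          inner ℂ ((star c') w) ((x * (W n * y * star (W n)) -
          (V * (W n * y * star (W n)) * star V) * x) Ω) := by
        intro n
        have e1 : (x * (W n * y * star (W n)) -
            (V * (W n * y * star (W n)) * star V) * x) (c' Ω) =
            c' ((x * (W n * y * star (W n)) -
            (V * (W n * y * star (W n)) * star V) * x) Ω) := by
          rw [← ContinuousLinearMap.mul_apply, ← hc' _ (hmemT n),
            ContinuousLinearMap.mul_apply]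
        rw [e1, ← ContinuousLinearMap.adjoint_inner_left, ← ContinuousLinearMap.star_eq_adjoint]
      simp only [heq]
      exact stepw ((star c') w)
  -- now remove the norm constraints by scaling
  intro x hx y hy v w
  by_cases hx0 : x = 0
  · subst hx0
    simpa using tendsto_const_nhds
  by_cases hy0 : y = 0
  · subst hy0
    simpa using tendsto_const_nhds
  have hnx : (0:ℝ) < ‖x‖ := norm_pos_iff.mpr hx0
  have hny : (0:ℝ) < ‖y‖ := norm_pos_iff.mpr hy0
  set x₀ : H →L[ℂ] H := ((‖x‖⁻¹ : ℝ) : ℂ) • x with hx₀def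
  set y₀ : H →L[ℂ] H := ((‖y‖⁻¹ : ℝ) : ℂ) • y with hy₀def
  have hx₀M : x₀ ∈ M := M.toStarSubalgebra.smul_mem hx _
  have hy₀M : y₀ ∈ M := M.toStarSubalgebra.smul_mem hy _
  have hx₀1 : ‖x₀‖ ≤ 1 := by
    rw [hx₀def, norm_smul, Complex.norm_real, Real.norm_eq_abs, abs_of_pos (by positivity),
      inv_mul_cancel₀ (ne_of_gt hnx)]
  have hy₀1 : ‖y₀‖ ≤ 1 := by
    rw [hy₀def, norm_smul, Complex.norm_real, Real.norm_eq_abs, abs_of_pos (by positivity),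
      inv_mul_cancel₀ (ne_of_gt hny)]
  have hxx : x = ((‖x‖ : ℝ) : ℂ) • x₀ := by
    rw [hx₀def, smul_smul, ← Complex.ofReal_mul, mul_inv_cancel₀ (ne_of_gt hnx)]
    simp
  have hyy : y = ((‖y‖ : ℝ) : ℂ) • y₀ := by
    rw [hy₀def, smul_smul, ← Complex.ofReal_mul, mul_inv_cancel₀ (ne_of_gt hny)]
    simp
  have hfun : ∀ n, (inner ℂ w ((x * (W n * y * star (W n)) -
      (V * (W n * y * star (W n)) * star V) * x) v) : ℂ) =
      ((‖x‖ : ℂ) * (‖y‖ : ℂ)) * inner ℂ w ((x₀ * (W n * y₀ * star (W n)) -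
      (V * (W n * y₀ * star (W n)) * star V) * x₀) v) := by
    intro n
    have hsm : x * (W n * y * star (W n)) - (V * (W n * y * star (W n)) * star V) * x =
        ((‖x‖ : ℂ) * (‖y‖ : ℂ)) • (x₀ * (W n * y₀ * star (W n)) -
        (V * (W n * y₀ * star (W n)) * star V) * x₀) := by
      conv_lhs => rw [hxx, hyy]
      simp only [smul_mul_assoc, mul_smul_comm, smul_smul, smul_sub]
      module
    rw [hsm, ContinuousLinearMap.smul_apply, inner_smul_right]
  have hkey := key x₀ hx₀M hx₀1 y₀ hy₀M hy₀1 v w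
  have := hkey.const_mul ((‖x‖ : ℂ) * (‖y‖ : ℂ))
  rw [mul_zero] at this
  exact this.congr (fun n => (hfun n).symm)
end

section
/- Let φ be a selfadjoint γ-twisted KMS functional with polar decomposition φ̃ = (u·Ω, Ω) on M, where ω̃ = (·Ω, Ω) is a faithful KMS (hence α̃-invariant) state, α̃_t(u) = u, and γ̃ = Ad(u*). Then u = u* and γ̃² = id. -/
open Complex

variable {H : Type*} [NormedAddCommGroup H] [InnerProductSpace ℂ H] [CompleteSpace H]

/-- if `φ = (u ·Ω, Ω)` is selfadjoint, where `ω̃ = (·Ω, Ω)` is a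
faithful KMS state for `α̃ = Ad(U(t))` (with `Ω` cyclic and separating), `u ∈ M`
unitary and `α̃`-invariant, then `u = u*`; hence `γ̃ = Ad(u*)` satisfies
`γ̃² = id`. -/
theorem stmt13 (M : VonNeumannAlgebra H) (Ω : H)
    (hcyc : Dense ((fun x : H →L[ℂ] H => x Ω) '' (M : Set (H →L[ℂ] H))))
    (hsep : ∀ x ∈ M, x Ω = 0 → x = 0)
    (U : ℝ → H →L[ℂ] H) (hUu : ∀ t, U t ∈ unitary (H →L[ℂ] H))
    (hU0 : U 0 = 1) (hUadd : ∀ s t, U (s + t) = U s * U t)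
    (hUΩ : ∀ t, U t Ω = Ω)
    (hUM : ∀ t, ∀ x ∈ M, U t * x * star (U t) ∈ M)
    (hKMS : ∀ x ∈ M, ∀ y ∈ M, ∃ F : ℂ → ℂ, MemAS F ∧
      (∀ t : ℝ, F (t : ℂ) = (inner ℂ Ω (((U t * x * star (U t)) * y) Ω) : ℂ)) ∧
      (∀ t : ℝ, F ((t : ℂ) + Complex.I) =
        (inner ℂ Ω ((y * (U t * x * star (U t))) Ω) : ℂ)))
    (u : H →L[ℂ] H) (hu : u ∈ M) (huu : star u * u = 1) (huu' : u * star u = 1)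
    (hUfix : ∀ t, U t * u * star (U t) = u)
    (hselfadj : ∀ x ∈ M,
      (inner ℂ Ω ((u * star x) Ω) : ℂ) = starRingEnd ℂ (inner ℂ Ω ((u * x) Ω) : ℂ)) :
    star u = u ∧ ∀ x : H →L[ℂ] H, star u * (star u * x * u) * u = x := by
  have hsu : star u ∈ M := star_mem hu
  have hadj : star u = ContinuousLinearMap.adjoint u := ContinuousLinearMap.star_eq_adjoint u
  -- move `u` across the inner product
  have A1 : ∀ x y : H, (inner ℂ (u x) y : ℂ) = inner ℂ x ((star u) y) := fun x y => by
    simp [hadj, ContinuousLinearMap.adjoint_inner_right]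
  have A2 : ∀ x y : H, (inner ℂ ((star u) x) y : ℂ) = inner ℂ x (u y) := fun x y => by
    simp [hadj, ContinuousLinearMap.adjoint_inner_left]
  have huΩ : (star u) (u Ω) = Ω := by
    have : (star u * u) Ω = (1 : H →L[ℂ] H) Ω := by rw [huu]
    simpa [ContinuousLinearMap.mul_apply] using this
  have huΩ' : u ((star u) Ω) = Ω := by
    have : (u * star u) Ω = (1 : H →L[ℂ] H) Ω := by rw [huu']
    simpa [ContinuousLinearMap.mul_apply] using this
  -- from selfadjointness at x = star u : ⟨Ω, u (u Ω)⟩ = ⟨Ω, Ω⟩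
  have h1 : (inner ℂ Ω (u (u Ω)) : ℂ) = inner ℂ Ω Ω := by
    have := hselfadj (star u) hsu
    rw [star_star, huu'] at this
    simpa [ContinuousLinearMap.mul_apply, inner_conj_symm] using this
  have e1 : (inner ℂ (u Ω) (u Ω) : ℂ) = inner ℂ Ω Ω := by rw [A1, huΩ]
  have e2 : (inner ℂ ((star u) Ω) ((star u) Ω) : ℂ) = inner ℂ Ω Ω := by rw [A2, huΩ']
  have e3 : (inner ℂ (u Ω) ((star u) Ω) : ℂ) = inner ℂ Ω Ω := by
    rw [← inner_conj_symm, A2, h1, inner_conj_symm]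
  have e4 : (inner ℂ ((star u) Ω) (u Ω) : ℂ) = inner ℂ Ω Ω := by
    rw [← inner_conj_symm, e3, inner_conj_symm]
  have hzero : (u - star u) Ω = 0 := by
    have : (inner ℂ ((u - star u) Ω) ((u - star u) Ω) : ℂ) = 0 := by
      simp only [ContinuousLinearMap.sub_apply, inner_sub_left, inner_sub_right,
        e1, e2, e3, e4]
      ring
    exact inner_self_eq_zero.mp this
  have hsue : star u = u := by
    have h := hsep (u - star u) (M.sub_mem hu hsu) hzero
    have : u - star u = 0 := h
    have := sub_eq_zero.mp this
    exact this.symm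
  refine ⟨hsue, fun x => ?_⟩
  have huu2 : u * u = 1 := by nth_rewrite 1 [← hsue]; exact huu
  rw [hsue]
  calc u * (u * x * u) * u = (u * u) * x * (u * u) := by noncomm_ring
    _ = x := by rw [huu2, one_mul, mul_one]
end
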